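/- arXiv:2001.05787 — 5 statements merged into one kernel-verified Lean document; each statement's English description precedes it below -/
import Mathlib

section
/- Let n, r be positive integers, a_1 ∈ {0,…,n−1}, a_2 ∈ {0,…,r−1}, and w ∈ ℂ. Then H(T_{a_1,a_2}(n,r); w) = (1/(nr)) ∑_{d | n, d ≥ 1} ∑_{e | r, e ≥ 1} c_d(a_1)·c_e(a_2)·(1 − w^d + r·w^d·𝟙{e | d})^{n/d}. -/
/-!
Detecting both congruences with roots of unity writes the enumerator as
`(1/(nr)) ∑_{uⁿ=1} ∑_{vʳ=1} u^{a₁} v^{a₂} ∑_x u^{-γ(x)} v^{-σ(x)} w^{wt(x)}`, and grouping `u`, `v`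
by their orders `d ∣ n`, `e ∣ r` produces the Ramanujan sums. For `z` of order `d` the inner sum
factorises. Modulo `d`, `γ` is additive on concatenations of blocks whose lengths are multiples
of `d`, which reduces everything to words of length `d`. Rotating such a word lowers `γ` by its
number of cyclic descents modulo `d`, and that number lies in `[0, d)` and vanishes only for
constant words, so averaging over the `d` rotations keeps exactly the constant words. What remains
is a product of letter weights `v^c w^{[c ≠ 0]}`, and the `d`-th powers of these weights sum to
`1 - w^d + r w^d [e ∣ d]`.
-/

open scoped Classical
open Finset

/-- `e(x) = exp(2πi x)` -/
noncomputable def expu (x : ℝ) : ℂ := Complex.exp (2 * Real.pi * Complex.I * x)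

/-- Ramanujan's sum `c_d(a)`. -/
noncomputable def ramanujan (d a : ℕ) : ℂ :=
  ∑ j ∈ (Finset.Icc 1 d).filter (fun j => Nat.gcd j d = 1), expu (((a : ℝ) * (j : ℝ)) / (d : ℝ))

/-- `γ(x) = ∑_{i=1}^{n-1} i·𝟙{x_i > x_{i+1}}` (1-indexed). -/
noncomputable def gam {n r : ℕ} (x : Fin n → Fin r) : ℕ :=
  ∑ i : Fin n, if h : (i : ℕ) + 1 < n then
      (if (x ⟨(i : ℕ) + 1, h⟩ : ℕ) < (x i : ℕ) then (i : ℕ) + 1 else 0) else 0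

/-- `σ(x) = ∑ x_i`. -/
noncomputable def sig {n r : ℕ} (x : Fin n → Fin r) : ℕ := ∑ i : Fin n, (x i : ℕ)

/-- The Hamming weight of `x`. -/
noncomputable def hwt {n r : ℕ} (x : Fin n → Fin r) : ℕ :=
  (Finset.univ.filter (fun i => (x i : ℕ) ≠ 0)).card

theorem sum_range_pow_of_pow_eq_one {K : Type*} [Field K] {u : K} {N : ℕ} (hu : u ^ N = 1) :
    ∑ m ∈ range N, u ^ m = if u = 1 then (N : K) else 0 := by
  split_ifs with h
  · simp [h]
  · rw [geom_sum_eq h, hu, sub_self, zero_div]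

theorem IsPrimitiveRoot.sum_nthRootsFinset_eq_sum_range {R M : Type*} [CommRing R] [IsDomain R]
    [AddCommMonoid M] {ζ : R} {N : ℕ} [NeZero N] (hζ : IsPrimitiveRoot ζ N) (F : R → M) :
    ∑ u ∈ Polynomial.nthRootsFinset N (1 : R), F u = ∑ m ∈ range N, F (ζ ^ m) := by
  refine (sum_nbij (ζ ^ ·) (fun m _ => ?_) (fun i hi j hj h => ?_) (fun u hu => ?_)
    (fun _ _ => rfl)).symm
  · rw [Polynomial.mem_nthRootsFinset (NeZero.pos N), ← pow_mul, mul_comm, pow_mul,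
      hζ.pow_eq_one, one_pow]
  · exact hζ.pow_inj (mem_range.mp hi) (mem_range.mp hj) h
  · obtain ⟨i, hi, rfl⟩ :=
      hζ.eq_pow_of_pow_eq_one ((Polynomial.mem_nthRootsFinset (NeZero.pos N) 1).mp hu)
    exact ⟨i, mem_range.mpr hi, rfl⟩

theorem IsPrimitiveRoot.sum_nthRootsFinset_pow_mul_inv_pow {K : Type*} [Field K] {ζ : K} {N : ℕ}
    [NeZero N] (hζ : IsPrimitiveRoot ζ N) (t a : ℕ) :
    ∑ u ∈ Polynomial.nthRootsFinset N (1 : K), u ^ a * u⁻¹ ^ t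
      = if t ≡ a [MOD N] then (N : K) else 0 := by
  have hζ0 : ζ ≠ 0 := hζ.ne_zero (NeZero.ne N)
  rw [hζ.sum_nthRootsFinset_eq_sum_range]
  have hpow : ∀ m, (ζ ^ m) ^ a * (ζ ^ m)⁻¹ ^ t = (ζ ^ a * ζ⁻¹ ^ t) ^ m := fun m => by ring
  have hroot : (ζ ^ a * ζ⁻¹ ^ t) ^ N = 1 := by
    rw [mul_pow, ← pow_mul, ← pow_mul, mul_comm a, mul_comm t, pow_mul, pow_mul, inv_pow,
      hζ.pow_eq_one]
    simp
  have hone : ζ ^ a * ζ⁻¹ ^ t = 1 ↔ t ≡ a [MOD N] := by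
    rw [inv_pow, ← div_eq_mul_inv, div_eq_one_iff_eq (pow_ne_zero _ hζ0),
      (hζ.isOfFinOrder (NeZero.ne N)).pow_eq_pow_iff_modEq, ← hζ.eq_orderOf, Nat.ModEq.comm]
  simp only [hpow, sum_range_pow_of_pow_eq_one hroot, hone]

theorem sum_nthRootsFinset_eq_sum_divisors_sum_primitiveRoots {R M : Type*} [CommRing R]
    [IsDomain R] [AddCommMonoid M] (N : ℕ) (F : R → M) :
    ∑ u ∈ Polynomial.nthRootsFinset N (1 : R), F u
      = ∑ d ∈ N.divisors, ∑ u ∈ primitiveRoots d R, F u := by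
  rw [IsPrimitiveRoot.nthRoots_one_eq_biUnion_primitiveRoots, sum_biUnion]
  exact fun i _ j _ hij => IsPrimitiveRoot.disjoint hij

theorem ramanujan_eq_sum_primitiveRoots (d a : ℕ) :
    ramanujan d a = ∑ u ∈ primitiveRoots d ℂ, u ^ a := by
  rcases Nat.eq_zero_or_pos d with rfl | hd
  · simp [ramanujan]
  have : NeZero d := ⟨hd.ne'⟩
  set ζ := Complex.exp (2 * Real.pi * Complex.I / d)
  have hζ : IsPrimitiveRoot ζ d := Complex.isPrimitiveRoot_exp d hd.ne'
  have hexpu : ∀ j : ℕ, expu ((a : ℝ) * j / d) = (ζ ^ j) ^ a := fun j => by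
    rw [← pow_mul, ← Complex.exp_nat_mul, expu]
    congr 1
    push_cast
    ring
  refine sum_nbij (ζ ^ ·) (fun j hj => ?_) (fun i hi j hj hij => ?_) (fun u hu => ?_)
    (fun j _ => hexpu j)
  · rw [mem_primitiveRoots hd]
    exact hζ.pow_of_coprime j (mem_filter.mp hj).2
  · rw [mem_coe, mem_filter, mem_Icc] at hi hj
    have hmod : i ≡ j [MOD d] := by
      rwa [(hζ.isOfFinOrder hd.ne').pow_eq_pow_iff_modEq, ← hζ.eq_orderOf] at hij
    have := (Nat.ModEq.add_right_cancel' 1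
      (by rwa [Nat.sub_add_cancel hi.1.1, Nat.sub_add_cancel hj.1.1])).eq_of_lt_of_lt
      (by omega : i - 1 < d) (by omega : j - 1 < d)
    omega
  · obtain ⟨i, hi, rfl⟩ := hζ.eq_pow_of_pow_eq_one ((mem_primitiveRoots hd).mp hu).pow_eq_one
    have hcop : i.Coprime d := (hζ.pow_iff_coprime hd i).mp ((mem_primitiveRoots hd).mp hu)
    rcases Nat.eq_zero_or_pos i with rfl | hi0
    · obtain rfl : d = 1 := Nat.coprime_zero_left d |>.mp hcop
      exact ⟨1, by simp, by simp [hζ.pow_eq_one]⟩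
    · exact ⟨i, mem_filter.mpr ⟨mem_Icc.mpr ⟨hi0, hi.le⟩, hcop⟩, rfl⟩

theorem ite_modEq_eq_inv_mul_sum {N : ℕ} [NeZero N] (t a : ℕ) :
    (if t ≡ a [MOD N] then (1 : ℂ) else 0)
      = (N : ℂ)⁻¹ * ∑ u ∈ Polynomial.nthRootsFinset N (1 : ℂ), u ^ a * u⁻¹ ^ t := by
  rw [(Complex.isPrimitiveRoot_exp N (NeZero.ne N)).sum_nthRootsFinset_pow_mul_inv_pow]
  split_ifs
  · exact (inv_mul_cancel₀ (Nat.cast_ne_zero.mpr (NeZero.ne N))).symm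
  · rw [mul_zero]

theorem sum_filter_modEq_and_modEq {ι : Type*} [Fintype ι] {n r : ℕ} [NeZero n] [NeZero r]
    (g h : ι → ℕ) (a b : ℕ) (W : ι → ℂ) :
    ∑ x ∈ univ.filter (fun x => g x ≡ a [MOD n] ∧ h x ≡ b [MOD r]), W x
      = 1 / (n * r) * ∑ u ∈ Polynomial.nthRootsFinset n (1 : ℂ),
          ∑ v ∈ Polynomial.nthRootsFinset r (1 : ℂ),
            u ^ a * v ^ b * ∑ x, u⁻¹ ^ g x * v⁻¹ ^ h x * W x := by
  calc ∑ x ∈ univ.filter (fun x => g x ≡ a [MOD n] ∧ h x ≡ b [MOD r]), W x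
      = ∑ x, (if g x ≡ a [MOD n] then (1 : ℂ) else 0) * (if h x ≡ b [MOD r] then 1 else 0)
          * W x := by
        rw [sum_filter]
        exact sum_congr rfl fun x _ => by split_ifs <;> simp_all
    _ = ∑ x, ∑ u ∈ Polynomial.nthRootsFinset n (1 : ℂ), ∑ v ∈ Polynomial.nthRootsFinset r (1 : ℂ),
          1 / (n * r) * (u ^ a * v ^ b * (u⁻¹ ^ g x * v⁻¹ ^ h x * W x)) := by
        refine sum_congr rfl fun x _ => ?_
        simp only [ite_modEq_eq_inv_mul_sum, mul_sum, sum_mul]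
        rw [sum_comm]
        exact sum_congr rfl fun u _ => sum_congr rfl fun v _ => by ring
    _ = _ := by
        rw [sum_comm, mul_sum]
        refine sum_congr rfl fun u _ => ?_
        rw [sum_comm, mul_sum]
        refine sum_congr rfl fun v _ => ?_
        rw [mul_sum, mul_sum]

section CyclicDescents

variable {d r : ℕ} [NeZero d]

def cyclicDescents (x : Fin d → Fin r) : Finset (Fin d) :=
  univ.filter fun i => x (i + 1) < x i

theorem Fin.val_add_one_eq_mod (i : Fin d) : ((i + 1 : Fin d) : ℕ) = ((i : ℕ) + 1) % d := by
  rw [Fin.val_add, Fin.val_one', Nat.add_mod_mod]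

theorem gam_eq_sum_cyclicDescents (x : Fin d → Fin r) :
    gam x = ∑ i ∈ cyclicDescents x, ((i + 1 : Fin d) : ℕ) := by
  rw [gam, cyclicDescents, sum_filter]
  refine sum_congr rfl fun i _ => ?_
  by_cases h : (i : ℕ) + 1 < d
  · have hi : (⟨(i : ℕ) + 1, h⟩ : Fin d) = i + 1 := Fin.ext (Fin.val_add_one_of_lt' h).symm
    rw [dif_pos h, hi, Fin.val_add_one_of_lt' h]
    rfl
  · have hi : ((i + 1 : Fin d) : ℕ) = 0 := by
      rw [Fin.val_add_one_eq_mod, show (i : ℕ) + 1 = d by omega, Nat.mod_self]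
    rw [dif_neg h, hi, ite_self]

theorem gam_rotate_add_card_modEq (x : Fin d → Fin r) :
    gam (fun i => x (i + 1)) + #(cyclicDescents x) ≡ gam x [MOD d] := by
  have hrot : gam (fun i => x (i + 1)) = ∑ i ∈ cyclicDescents x, (i : ℕ) := by
    rw [gam_eq_sum_cyclicDescents, cyclicDescents, cyclicDescents, sum_filter, sum_filter]
    exact Equiv.sum_comp (Equiv.addRight 1) fun j => if x (j + 1) < x j then (j : ℕ) else 0
  rw [hrot, gam_eq_sum_cyclicDescents, card_eq_sum_ones, ← sum_add_distrib]
  exact Nat.ModEq.sum fun i _ => by rw [Fin.val_add_one_eq_mod]; exact (Nat.mod_modEq _ _).symm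

theorem card_cyclicDescents_rotate (x : Fin d → Fin r) :
    #(cyclicDescents fun i => x (i + 1)) = #(cyclicDescents x) := by
  simp only [cyclicDescents, card_filter]
  exact Equiv.sum_comp (Equiv.addRight 1) fun j => if x (j + 1) < x j then 1 else 0

theorem sum_val_add_one_sub_val (x : Fin d → Fin r) : ∑ i, ((x (i + 1) : ℤ) - x i) = 0 := by
  rw [sum_sub_distrib, sub_eq_zero]
  exact Equiv.sum_comp (Equiv.addRight 1) fun i => (x i : ℤ)

theorem card_cyclicDescents_lt (x : Fin d → Fin r) : #(cyclicDescents x) < d := by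
  by_contra! h
  have hall : cyclicDescents x = univ :=
    eq_univ_of_card _ (le_antisymm (card_le_univ _) (by simpa using h))
  have hneg : ∑ i, ((x (i + 1) : ℤ) - x i) < ∑ _i : Fin d, 0 := by
    refine sum_lt_sum_of_nonempty univ_nonempty fun i _ => sub_neg.mpr ?_
    have := hall ▸ mem_univ i
    exact_mod_cast (mem_filter.mp this).2
  rw [sum_val_add_one_sub_val, sum_const_zero] at hneg
  exact lt_irrefl _ hneg

theorem cyclicDescents_eq_empty_iff (x : Fin d → Fin r) :
    cyclicDescents x = ∅ ↔ ∀ i, x i = x 0 := by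
  constructor
  · intro hx
    have hle : ∀ i, (x i : ℤ) ≤ x (i + 1) := fun i => by
      have : i ∉ cyclicDescents x := hx ▸ notMem_empty i
      exact_mod_cast not_lt.mp fun h => this (mem_filter.mpr ⟨mem_univ i, h⟩)
    have hstep : ∀ i, x (i + 1) = x i := fun i => Fin.ext <| by
      have := (sum_eq_zero_iff_of_nonneg fun i _ => sub_nonneg.mpr (hle i)).mp
        (sum_val_add_one_sub_val x) i (mem_univ i)
      omega
    have hval : ∀ m (hm : m < d), x ⟨m, hm⟩ = x 0 := fun m => by
      induction m with
      | zero => exact fun _ => rfl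
      | succ m ih =>
        intro hm
        rw [← ih (by omega), ← hstep ⟨m, by omega⟩]
        exact congrArg x (Fin.ext (Fin.val_add_one_of_lt' (i := ⟨m, by omega⟩) hm).symm)
    exact fun i => hval i i.isLt
  · intro hx
    exact filter_eq_empty_iff.mpr fun i _ => by rw [hx i, hx (i + 1)]; exact lt_irrefl _

theorem dvd_card_cyclicDescents_iff (x : Fin d → Fin r) :
    d ∣ #(cyclicDescents x) ↔ cyclicDescents x = ∅ := by
  refine ⟨fun h => card_eq_zero.mp (Nat.eq_zero_of_dvd_of_lt h (card_cyclicDescents_lt x)), ?_⟩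
  intro h
  rw [h, card_empty]
  exact dvd_zero d

theorem sum_filter_cyclicDescents_eq_empty (z : ℂ) (f : Fin r → ℂ) :
    ∑ x ∈ univ.filter (fun x : Fin d → Fin r => cyclicDescents x = ∅), z ^ gam x * ∏ i, f (x i)
      = ∑ c, f c ^ d := by
  refine sum_nbij' (fun x => x 0) (fun c _ => c) (fun _ _ => mem_univ _) (fun c _ => ?_)
    (fun x hx => ?_) (fun _ _ => rfl) (fun x hx => ?_)
  · simp [cyclicDescents_eq_empty_iff]
  · exact funext fun i => ((cyclicDescents_eq_empty_iff x).mp (mem_filter.mp hx).2 i).symm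
  · have hx := (mem_filter.mp hx).2
    rw [gam_eq_sum_cyclicDescents, hx, sum_empty, pow_zero, one_mul,
      prod_congr rfl fun i _ => by rw [(cyclicDescents_eq_empty_iff x).mp hx i], prod_const,
      card_univ, Fintype.card_fin]

theorem sum_pow_gam_mul_prod_of_isPrimitiveRoot {z : ℂ} (hz : IsPrimitiveRoot z d)
    (f : Fin r → ℂ) :
    ∑ x : Fin d → Fin r, z ^ gam x * ∏ i, f (x i) = ∑ c, f c ^ d := by
  set φ : (Fin d → Fin r) → ℂ := fun x => z ^ gam x * ∏ i, f (x i)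
  set ω : (Fin d → Fin r) → ℂ := fun x => (z ^ #(cyclicDescents x))⁻¹
  have hz0 : z ≠ 0 := hz.ne_zero (NeZero.ne d)
  have hrot : ∀ x, φ (fun i => x (i + 1)) = φ x * ω x := fun x => by
    have hgam : z ^ gam (fun i => x (i + 1)) * z ^ #(cyclicDescents x) = z ^ gam x := by
      rw [← pow_add]
      exact pow_eq_pow_of_modEq (gam_rotate_add_card_modEq x) hz.pow_eq_one
    have hprod : ∏ i, f (x (i + 1)) = ∏ i, f (x i) :=
      Equiv.prod_comp (Equiv.addRight 1) fun i => f (x i)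
    simp only [φ, ω, hprod, ← hgam]
    field_simp
  have hinv : ∀ t, ∑ x, φ x * ω x ^ t = ∑ x, φ x := fun t => by
    induction t with
    | zero => simp
    | succ t ih =>
      let rotate := (Equiv.addRight (1 : Fin d)).symm.arrowCongr (Equiv.refl (Fin r))
      rw [← ih, ← rotate.sum_comp fun x => φ x * ω x ^ t]
      refine sum_congr rfl fun x _ => ?_
      have hω : ω (fun i => x (i + 1)) = ω x := by simp only [ω, card_cyclicDescents_rotate]
      rw [show rotate x = fun i => x (i + 1) from rfl, hrot, hω, pow_succ]
      ring
  have hgeom : ∀ x, ∑ t ∈ range d, ω x ^ t = if cyclicDescents x = ∅ then (d : ℂ) else 0 := by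
    intro x
    have hroot : ω x ^ d = 1 := by
      simp only [ω]
      rw [inv_pow, ← pow_mul, mul_comm, pow_mul, hz.pow_eq_one, one_pow, inv_one]
    rw [sum_range_pow_of_pow_eq_one hroot]
    simp only [ω, inv_eq_one, hz.pow_eq_one_iff_dvd, dvd_card_cyclicDescents_iff]
  have hd : (d : ℂ) ≠ 0 := Nat.cast_ne_zero.mpr (NeZero.ne d)
  refine mul_left_cancel₀ hd ?_
  calc (d : ℂ) * ∑ x, φ x = ∑ t ∈ range d, ∑ x, φ x * ω x ^ t := by simp [hinv]
    _ = ∑ x, φ x * ∑ t ∈ range d, ω x ^ t := by rw [sum_comm]; simp only [mul_sum]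
    _ = d * ∑ x ∈ univ.filter (fun x => cyclicDescents x = ∅), φ x := by
      simp only [hgeom, sum_filter, mul_sum, mul_ite, mul_zero]
      exact sum_congr rfl fun x _ => by split_ifs <;> ring
    _ = d * ∑ c, f c ^ d := by rw [sum_filter_cyclicDescents_eq_empty]

end CyclicDescents

section Concatenation

variable {r : ℕ}

-- Padding with zeros lets the descents of a concatenation be compared index by index.
def toSeq {n : ℕ} (x : Fin n → Fin r) (i : ℕ) : ℕ :=
  if h : i < n then x ⟨i, h⟩ else 0

theorem gam_eq_sum_range {n : ℕ} (x : Fin n → Fin r) :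
    gam x = ∑ i ∈ range n, if i + 1 < n ∧ toSeq x (i + 1) < toSeq x i then i + 1 else 0 := by
  rw [gam, ← Fin.sum_univ_eq_sum_range]
  refine sum_congr rfl fun i _ => ?_
  by_cases h : (i : ℕ) + 1 < n
  · simp [toSeq, h]
  · simp [h]

theorem toSeq_append_left {m d : ℕ} (u : Fin m → Fin r) (v : Fin d → Fin r) {i : ℕ}
    (hi : i < m) : toSeq (Fin.append u v) i = toSeq u i := by
  rw [toSeq, toSeq, dif_pos hi, dif_pos (by omega)]
  exact congrArg _ (Fin.append_left u v ⟨i, hi⟩)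

theorem toSeq_append_right {m d : ℕ} (u : Fin m → Fin r) (v : Fin d → Fin r) (j : ℕ) :
    toSeq (Fin.append u v) (m + j) = toSeq v j := by
  by_cases hj : j < d
  · rw [toSeq, toSeq, dif_pos hj, dif_pos (by omega)]
    exact congrArg _ (Fin.append_right u v ⟨j, hj⟩)
  · rw [toSeq, toSeq, dif_neg hj, dif_neg (by omega)]

theorem gam_append_modEq {m d : ℕ} (u : Fin m → Fin r) (v : Fin d → Fin r) :
    gam (Fin.append u v) ≡ gam u + gam v [MOD m] := by
  rw [gam_eq_sum_range, gam_eq_sum_range u, gam_eq_sum_range v, sum_range_add]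
  refine Nat.ModEq.add (Nat.ModEq.sum fun i hi => ?_) (Nat.ModEq.sum fun j _ => ?_)
  · rw [mem_range] at hi
    by_cases h : i + 1 < m
    · rw [toSeq_append_left u v h, toSeq_append_left u v hi]
      simp only [h, show i + 1 < m + d by omega, true_and]
      rfl
    · rw [if_neg (show ¬(i + 1 < m ∧ toSeq u (i + 1) < toSeq u i) from fun h' => h h'.1)]
      split_ifs <;> simp [Nat.ModEq, show i + 1 = m by omega]
  · rw [show m + j + 1 = m + (j + 1) by ring, toSeq_append_right, toSeq_append_right]
    simp only [add_lt_add_iff_left]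
    split_ifs
    · exact Nat.add_modEq_left
    · rfl

theorem sum_pow_gam_mul_prod_mul {d : ℕ} {z : ℂ} (hz : z ^ d = 1) (f : Fin r → ℂ) (k : ℕ) :
    ∑ x : Fin (d * k) → Fin r, z ^ gam x * ∏ i, f (x i)
      = (∑ x : Fin d → Fin r, z ^ gam x * ∏ i, f (x i)) ^ k := by
  induction k with
  | zero => simp [gam]
  | succ k ih =>
    have hzk : z ^ (d * k) = 1 := by rw [pow_mul, hz, one_pow]
    show ∑ x : Fin (d * k + d) → Fin r, _ = _
    rw [pow_succ, ← ih, sum_mul_sum, ← (Fin.appendEquiv (d * k) d).sum_comp, Fintype.sum_prod_type]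
    refine sum_congr rfl fun u _ => sum_congr rfl fun v _ => ?_
    show z ^ gam (Fin.append u v) * ∏ i, f (Fin.append u v i) = _
    rw [pow_eq_pow_of_modEq (gam_append_modEq u v) hzk, pow_add, Fin.prod_univ_add]
    simp only [Fin.append_left, Fin.append_right]
    ring

theorem sum_pow_gam_mul_prod_of_dvd {n d : ℕ} [NeZero d] {z : ℂ} (hz : IsPrimitiveRoot z d)
    (hdn : d ∣ n) (f : Fin r → ℂ) :
    ∑ x : Fin n → Fin r, z ^ gam x * ∏ i, f (x i) = (∑ c, f c ^ d) ^ (n / d) := by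
  obtain ⟨k, rfl⟩ := hdn
  rw [sum_pow_gam_mul_prod_mul hz.pow_eq_one, sum_pow_gam_mul_prod_of_isPrimitiveRoot hz,
    Nat.mul_div_cancel_left k (NeZero.pos d)]

end Concatenation

def letterWeight {r : ℕ} (y w : ℂ) (c : Fin r) : ℂ :=
  y ^ (c : ℕ) * if (c : ℕ) = 0 then 1 else w

theorem prod_letterWeight {n r : ℕ} (y w : ℂ) (x : Fin n → Fin r) :
    ∏ i, letterWeight y w (x i) = y ^ sig x * w ^ hwt x := by
  unfold letterWeight
  rw [prod_mul_distrib, sig, prod_pow_eq_pow_sum, hwt, prod_ite,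
    prod_const_one, prod_const, one_mul]

theorem sum_letterWeight_pow {r e : ℕ} (hr : 0 < r) {y : ℂ} (hy : IsPrimitiveRoot y e)
    (her : e ∣ r) (w : ℂ) (d : ℕ) :
    ∑ c : Fin r, letterWeight y w c ^ d = 1 - w ^ d + r * w ^ d * if e ∣ d then 1 else 0 := by
  unfold letterWeight
  rw [Fin.sum_univ_eq_sum_range (fun c => (y ^ c * if c = 0 then 1 else w) ^ d)]
  have hsplit : ∀ c, (y ^ c * if c = 0 then 1 else w) ^ d
      = w ^ d * (y ^ d) ^ c + if c = 0 then 1 - w ^ d else 0 := fun c => by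
    split_ifs with hc
    · simp [hc]
    · ring
  have hroot : (y ^ d) ^ r = 1 := by
    rw [← pow_mul, mul_comm, pow_mul, (hy.pow_eq_one_iff_dvd r).mpr her, one_pow]
  rw [sum_congr rfl fun c _ => hsplit c, sum_add_distrib, ← mul_sum,
    sum_range_pow_of_pow_eq_one hroot, sum_ite_eq' (range r) 0, if_pos (mem_range.mpr hr),
    hy.pow_eq_one_iff_dvd]
  split_ifs <;> ring

theorem sum_pow_gam_mul_pow_sig_mul_pow_hwt {n r d e : ℕ} [NeZero d] (hr : 0 < r) {z y : ℂ}
    (hz : IsPrimitiveRoot z d) (hdn : d ∣ n) (hy : IsPrimitiveRoot y e) (her : e ∣ r) (w : ℂ) :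
    ∑ x : Fin n → Fin r, z ^ gam x * y ^ sig x * w ^ hwt x
      = (1 - w ^ d + r * w ^ d * if e ∣ d then 1 else 0) ^ (n / d) := by
  simp_rw [mul_assoc (z ^ _), ← prod_letterWeight]
  rw [sum_pow_gam_mul_prod_of_dvd hz hdn, sum_letterWeight_pow hr hy her]

theorem stmt_4_general (n r : ℕ) (hn : 0 < n) (hr : 0 < r)
    (a₁ a₂ : ℕ) (w : ℂ) :
    ∑ x ∈ Finset.univ.filter
        (fun x : Fin n → Fin r => gam x ≡ a₁ [MOD n] ∧ sig x ≡ a₂ [MOD r]),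
      w ^ hwt x
    = (1 / ((n : ℂ) * (r : ℂ))) *
        ∑ d ∈ n.divisors, ∑ e ∈ r.divisors,
          ramanujan d a₁ * ramanujan e a₂ *
            (1 - w ^ d + (r : ℂ) * w ^ d * (if e ∣ d then 1 else 0)) ^ (n / d) := by
  have : NeZero n := ⟨hn.ne'⟩
  have : NeZero r := ⟨hr.ne'⟩
  rw [sum_filter_modEq_and_modEq gam sig a₁ a₂ fun x => w ^ hwt x,
    sum_nthRootsFinset_eq_sum_divisors_sum_primitiveRoots]
  simp_rw [sum_nthRootsFinset_eq_sum_divisors_sum_primitiveRoots r]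
  congr 1
  refine sum_congr rfl fun d hd => ?_
  have : NeZero d := ⟨Nat.ne_of_gt (Nat.pos_of_mem_divisors hd)⟩
  rw [sum_comm]
  refine sum_congr rfl fun e he => ?_
  rw [ramanujan_eq_sum_primitiveRoots, ramanujan_eq_sum_primitiveRoots, sum_mul_sum, sum_mul]
  refine sum_congr rfl fun u hu => ?_
  rw [sum_mul]
  refine sum_congr rfl fun v hv => ?_
  rw [sum_pow_gam_mul_pow_sig_mul_pow_hwt hr (isPrimitiveRoot_of_mem_primitiveRoots hu).inv
    (Nat.dvd_of_mem_divisors hd) (isPrimitiveRoot_of_mem_primitiveRoots hv).inv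
    (Nat.dvd_of_mem_divisors he)]

theorem stmt_4 (n r : ℕ) (hn : 0 < n) (hr : 0 < r)
    (a₁ a₂ : ℕ) (ha₁ : a₁ < n) (ha₂ : a₂ < r) (w : ℂ) :
    ∑ x ∈ Finset.univ.filter
        (fun x : Fin n → Fin r => gam x ≡ a₁ [MOD n] ∧ sig x ≡ a₂ [MOD r]),
      w ^ hwt x
    = (1 / ((n : ℂ) * (r : ℂ))) *
        ∑ d ∈ n.divisors, ∑ e ∈ r.divisors,
          ramanujan d a₁ * ramanujan e a₂ *
            (1 - w ^ d + (r : ℂ) * w ^ d * (if e ∣ d then 1 else 0)) ^ (n / d) :=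
  stmt_4_general n r hn hr a₁ a₂ w
end

section
/- Let n, r be positive integers. For all a_1 ∈ {0,…,n−1} and a_2 ∈ {0,…,r−1}, |T_{a_1,a_2}(n,r)| ≤ |T_{0,0}(n,r)|, and moreover |T_{0,0}(n,r)| = (1/(nr)) ∑_{d | n, d ≥ 1} φ(d)·r^{n/d}·gcd(r,d), where φ is Euler's totient function. -/
open scoped Classical
open Finset

/-- The non-binary Tenengolts code `T_{a₁,a₂}(n,r)`. -/
noncomputable def Tcode (n r a₁ a₂ : ℕ) : Finset (Fin n → Fin r) :=
  Finset.univ.filter (fun x : Fin n → Fin r => gam x ≡ a₁ [MOD n] ∧ sig x ≡ a₂ [MOD r])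

/-!
Let `ζ` and `ξ` be primitive `n`-th and `r`-th roots of unity. By orthogonality of characters,
`n r |T_{a₁,a₂}| = ∑_{j<n} ∑_{k<r} ζ^{-j a₁} ξ^{-k a₂} S(j,k)` with
`S(j,k) = ∑_x ζ^{j γ(x)} ξ^{k σ(x)}`. Every `S(j,k)` turns out to be a nonnegative integer, so the
triangle inequality shows that `(a₁, a₂) = (0, 0)` is the largest class, and the size of that class
is `∑_{j,k} S(j,k) / (n r)`.

To evaluate `S(j,k)`, let `g = gcd(n,j)` and `e = n / g`, the order of `ζ^j`. Modulo `e`, `γ` is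
additive over the `g` consecutive blocks of length `e` of a word, so `S(j,k)` is the `g`-th power of
the same sum over words of length `e`. For words of length `e`, the cyclic rotation
`x ↦ (x₂, …, x_e, x₁)` preserves `σ` and the number `D(x) < e` of cyclic descents, and lowers `γ`
by `D(x)` modulo `e`. So the total contribution of the words with `D(x) = t` is unchanged by
multiplication with `ζ^{jt}`, hence vanishes for `0 < t < e`, and only the constant words remain:
`∑_{a<r} ξ^{k e a}`, which is `r` if `r ∣ k e` and `0` otherwise.
-/

lemma geom_sum_eq_ite_of_pow_eq_one {K : Type*} [Field K] {w : K} {N : ℕ} (h : w ^ N = 1) :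
    ∑ t ∈ range N, w ^ t = if w = 1 then (N : K) else 0 := by
  split_ifs with hw
  · simp [hw]
  · rw [geom_sum_eq hw, h, sub_self, zero_div]

lemma IsPrimitiveRoot.pow_div_gcd {M : Type*} [CommMonoid M] {ζ : M} {n : ℕ}
    (hζ : IsPrimitiveRoot ζ n) (hn : n ≠ 0) (j : ℕ) : IsPrimitiveRoot (ζ ^ j) (n / n.gcd j) := by
  rw [hζ.eq_orderOf, ← (hζ.isOfFinOrder hn).orderOf_pow]
  exact IsPrimitiveRoot.orderOf _

lemma IsPrimitiveRoot.sum_pow_mul_inv_pow {K : Type*} [Field K] {ζ : K} {N : ℕ}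
    (hζ : IsPrimitiveRoot ζ N) (a b : ℕ) :
    ∑ j ∈ range N, ζ ^ (j * a) * (ζ ^ (j * b))⁻¹ = if a ≡ b [MOD N] then (N : K) else 0 := by
  rcases N.eq_zero_or_pos with rfl | hN
  · simp
  have hζb : ζ ^ b ≠ 0 := pow_ne_zero _ (hζ.ne_zero hN.ne')
  have hw : (ζ ^ a * (ζ ^ b)⁻¹) ^ N = 1 := by
    rw [mul_pow, inv_pow, ← pow_mul, ← pow_mul, pow_mul', pow_mul' ζ b, hζ.pow_eq_one,
      one_pow, one_pow, inv_one, mul_one]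
  have hterm (j : ℕ) : ζ ^ (j * a) * (ζ ^ (j * b))⁻¹ = (ζ ^ a * (ζ ^ b)⁻¹) ^ j := by
    rw [mul_pow, inv_pow, ← pow_mul, ← pow_mul, mul_comm a, mul_comm b]
  have hpow : ζ ^ a = ζ ^ b ↔ a ≡ b [MOD N] := by
    rw [hζ.eq_orderOf]
    exact (hζ.isOfFinOrder hN.ne').pow_eq_pow_iff_modEq
  simp_rw [hterm, geom_sum_eq_ite_of_pow_eq_one hw, mul_inv_eq_one₀ hζb, hpow]

lemma Nat.dvd_mul_iff_div_gcd_dvd {r e : ℕ} (hr : 0 < r) (k : ℕ) :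
    r ∣ k * e ↔ r / r.gcd e ∣ k := by
  have hg : 0 < r.gcd e := Nat.gcd_pos_of_pos_left e hr
  have hcop : (r / r.gcd e).Coprime (e / r.gcd e) := Nat.coprime_div_gcd_div_gcd hg
  conv_rhs => rw [← hcop.dvd_mul_right, ← Nat.mul_dvd_mul_iff_left hg,
    Nat.mul_div_cancel' (Nat.gcd_dvd_left r e), mul_left_comm,
    Nat.mul_div_cancel' (Nat.gcd_dvd_right r e)]

lemma Nat.card_filter_range_dvd_mul {r : ℕ} (hr : 0 < r) (e : ℕ) :
    #{k ∈ range r | r ∣ k * e} = r.gcd e := by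
  have hs : 0 < r / r.gcd e := Nat.div_pos (Nat.gcd_le_left e hr) (Nat.gcd_pos_of_pos_left e hr)
  simp_rw [Nat.dvd_mul_iff_div_gcd_dvd hr, ← Nat.modEq_zero_iff_dvd,
    ← Nat.count_eq_card_filter_range, Nat.count_modEq_card r hs, Nat.zero_mod,
    Nat.mod_eq_zero_of_dvd (Nat.div_dvd_of_dvd (Nat.gcd_dvd_left r e)), lt_irrefl, if_false,
    add_zero, Nat.div_div_self (Nat.gcd_dvd_left r e) hr.ne']

lemma Nat.sum_range_gcd_eq_sum_divisors {M : Type*} [AddCommMonoid M] {n : ℕ} (hn : n ≠ 0)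
    (f : ℕ → M) : ∑ j ∈ range n, f (n.gcd j) = ∑ d ∈ n.divisors, Nat.totient d • f (n / d) := by
  rw [← sum_fiberwise_of_maps_to (g := n.gcd) (t := n.divisors)
    (fun j _ => Nat.mem_divisors.2 ⟨Nat.gcd_dvd_left n j, hn⟩), ← Nat.sum_div_divisors]
  refine sum_congr rfl fun d hd => ?_
  have hdn := Nat.dvd_of_mem_divisors hd
  rw [sum_congr rfl fun j hj => by rw [(mem_filter.1 hj).2], sum_const,
    ← Nat.totient_div_of_dvd (Nat.div_dvd_of_dvd hdn), Nat.div_div_self hdn hn]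

section Counting

variable {α : Type*} [Fintype α] {n r : ℕ}

theorem card_filter_modEq_mul_eq {K : Type*} [Field K] {ζ ξ : K} (hζ : IsPrimitiveRoot ζ n)
    (hξ : IsPrimitiveRoot ξ r) (f g : α → ℕ) (a b : ℕ) :
    (#{x | f x ≡ a [MOD n] ∧ g x ≡ b [MOD r]} : K) * (n * r)
      = ∑ j ∈ range n, ∑ k ∈ range r,
          (ζ ^ (j * a))⁻¹ * (ξ ^ (k * b))⁻¹ * ∑ x, ζ ^ (j * f x) * ξ ^ (k * g x) := by
  calc (#{x | f x ≡ a [MOD n] ∧ g x ≡ b [MOD r]} : K) * (n * r)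
      = ∑ x, (∑ j ∈ range n, ζ ^ (j * f x) * (ζ ^ (j * a))⁻¹) *
          ∑ k ∈ range r, ξ ^ (k * g x) * (ξ ^ (k * b))⁻¹ := by
        rw [natCast_card_filter, sum_mul]
        refine sum_congr rfl fun x _ => ?_
        rw [hζ.sum_pow_mul_inv_pow, hξ.sum_pow_mul_inv_pow]
        by_cases hf : f x ≡ a [MOD n] <;> by_cases hg : g x ≡ b [MOD r] <;> simp [hf, hg]
    _ = ∑ j ∈ range n, ∑ x, ∑ k ∈ range r,
          ζ ^ (j * f x) * (ζ ^ (j * a))⁻¹ * (ξ ^ (k * g x) * (ξ ^ (k * b))⁻¹) := by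
        simp_rw [sum_mul_sum]
        exact sum_comm
    _ = _ := by
        refine sum_congr rfl fun j _ => ?_
        rw [sum_comm]
        refine sum_congr rfl fun k _ => ?_
        rw [mul_sum]
        exact sum_congr rfl fun x _ => by ring

theorem card_filter_modEq_le {ζ ξ : ℂ} (hζ : IsPrimitiveRoot ζ n) (hξ : IsPrimitiveRoot ξ r)
    (hn : 0 < n) (hr : 0 < r) (f g : α → ℕ) (N : ℕ → ℕ → ℕ)
    (hN : ∀ j k, ∑ x, ζ ^ (j * f x) * ξ ^ (k * g x) = N j k) (a b : ℕ) :
    #{x | f x ≡ a [MOD n] ∧ g x ≡ b [MOD r]} ≤ #{x | f x ≡ 0 [MOD n] ∧ g x ≡ 0 [MOD r]} := by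
  have hnorm (c : ℕ) : ‖(c : ℂ) * (n * r)‖ = c * (n * r) := by
    norm_cast
  have hunit {ω : ℂ} {m : ℕ} (hω : IsPrimitiveRoot ω m) (hm : 0 < m) (i : ℕ) : ‖(ω ^ i)⁻¹‖ = 1 := by
    rw [norm_inv, norm_pow, hω.norm'_eq_one hm.ne', one_pow, inv_one]
  have hle : (#{x | f x ≡ a [MOD n] ∧ g x ≡ b [MOD r]} : ℝ) * (n * r)
      ≤ #{x | f x ≡ 0 [MOD n] ∧ g x ≡ 0 [MOD r]} * (n * r) := by
    rw [← hnorm, ← hnorm, card_filter_modEq_mul_eq hζ hξ, card_filter_modEq_mul_eq hζ hξ]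
    simp only [hN, mul_zero, pow_zero, inv_one, one_mul]
    calc _ ≤ ∑ j ∈ range n, ∑ k ∈ range r, ‖(ζ ^ (j * a))⁻¹ * (ξ ^ (k * b))⁻¹ * (N j k : ℂ)‖ :=
          (norm_sum_le _ _).trans (sum_le_sum fun j _ => norm_sum_le _ _)
      _ = _ := by
          simp only [norm_mul, hunit hζ hn, hunit hξ hr, one_mul]
          norm_cast
  exact_mod_cast le_of_mul_le_mul_right hle (by positivity)

end Counting

namespace Tenengolts

variable {m d r : ℕ}

lemma gam_const (a : Fin r) : gam (Function.const (Fin d) a) = 0 := by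
  simp [gam]

lemma sig_const (a : Fin r) : sig (Function.const (Fin d) a) = d * a := by
  simp [sig]

section Rotation

open Fin.NatCast

variable [NeZero d]

-- Positions are natural numbers read modulo `d`, so `descent x (d - 1)` compares `x (d - 1)`
-- with `x 0`.
def descent (x : Fin d → Fin r) (i : ℕ) : ℕ := if x (i + 1) < x i then 1 else 0

def cyclicDescents (x : Fin d → Fin r) : ℕ := ∑ i ∈ range d, descent x i

def rotate (x : Fin d → Fin r) : Fin d → Fin r := fun i => x (i + 1)

lemma rotate_bijective : Function.Bijective (rotate : (Fin d → Fin r) → Fin d → Fin r) :=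
  (Equiv.arrowCongr (Equiv.addRight (1 : Fin d)).symm (Equiv.refl (Fin r))).bijective

lemma descent_rotate (x : Fin d → Fin r) (i : ℕ) : descent (rotate x) i = descent x (i + 1) := by
  simp only [descent, rotate, Nat.cast_succ]
  rfl

lemma descent_add_self (x : Fin d → Fin r) (i : ℕ) : descent x (i + d) = descent x i := by
  simp [descent]

lemma descent_le_one (x : Fin d → Fin r) (i : ℕ) : descent x i ≤ 1 := by
  unfold descent
  split_ifs <;> simp

lemma gam_eq_sum_range (x : Fin d → Fin r) :
    gam x = ∑ i ∈ range (d - 1), (i + 1) * descent x i := by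
  have hterm (i : Fin d) (h : (i : ℕ) + 1 < d) :
      (if (x ⟨i + 1, h⟩ : ℕ) < x i then (i : ℕ) + 1 else 0) = ((i : ℕ) + 1) * descent x i := by
    have hsucc : (⟨i + 1, h⟩ : Fin d) = ((i : ℕ) : Fin d) + 1 := by
      ext
      simp [Fin.val_add, Nat.mod_eq_of_lt h]
    simp [descent, hsucc]
  obtain ⟨e, rfl⟩ := Nat.exists_eq_add_one_of_ne_zero (NeZero.ne d)
  calc gam x = ∑ i : Fin (e + 1), if (i : ℕ) < e then ((i : ℕ) + 1) * descent x i else 0 := by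
        refine sum_congr rfl fun i _ => ?_
        by_cases h : (i : ℕ) + 1 < e + 1
        · rw [dif_pos h, hterm i h, if_pos (by omega)]
        · rw [dif_neg h, if_neg (by omega)]
    _ = ∑ i ∈ range e, (i + 1) * descent x i := by
        rw [Fin.sum_univ_eq_sum_range (fun i => if i < e then (i + 1) * descent x i else 0),
          sum_range_succ, if_neg (lt_irrefl e), add_zero]
        exact sum_congr rfl fun i hi => if_pos (mem_range.1 hi)

lemma gam_rotate_add_cyclicDescents (x : Fin d → Fin r) :
    gam (rotate x) + cyclicDescents x = gam x + d * descent x (d - 1) := by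
  obtain ⟨e, rfl⟩ := Nat.exists_eq_add_one_of_ne_zero (NeZero.ne d)
  have hshift : ∑ i ∈ range e, (i + 1) * descent x (i + 1)
      = ∑ i ∈ range (e + 1), i * descent x i := by
    rw [sum_range_succ']
    simp
  simp only [gam_eq_sum_range, cyclicDescents, descent_rotate, Nat.add_sub_cancel, hshift]
  rw [← sum_add_distrib, sum_range_succ]
  simp only [add_mul, one_mul]

lemma gam_rotate_add_cyclicDescents_modEq (x : Fin d → Fin r) :
    gam (rotate x) + cyclicDescents x ≡ gam x [MOD d] := by
  rw [Nat.ModEq, gam_rotate_add_cyclicDescents, Nat.add_mul_mod_self_left]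

lemma cyclicDescents_rotate (x : Fin d → Fin r) :
    cyclicDescents (rotate x) = cyclicDescents x := by
  obtain ⟨e, rfl⟩ := Nat.exists_eq_add_one_of_ne_zero (NeZero.ne d)
  simp only [cyclicDescents, descent_rotate]
  rw [sum_range_succ, sum_range_succ' (descent x)]
  simpa using descent_add_self x 0

lemma sig_eq_sum_range (x : Fin d → Fin r) : sig x = ∑ i ∈ range d, (x i : ℕ) := by
  rw [sig, ← Fin.sum_univ_eq_sum_range]
  simp

lemma sig_rotate (x : Fin d → Fin r) : sig (rotate x) = sig x :=
  Fintype.sum_equiv (Equiv.addRight 1) _ _ fun _ => rfl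

lemma sum_range_rotate (x : Fin d → Fin r) :
    ∑ i ∈ range d, (x (i + 1) : ℕ) = ∑ i ∈ range d, (x i : ℕ) := by
  simpa [sig_eq_sum_range, rotate] using sig_rotate x

lemma cyclicDescents_lt (x : Fin d → Fin r) : cyclicDescents x < d := by
  have hex : ∃ i ∈ range d, descent x i < 1 := by
    by_contra! h
    have hlt : ∑ i ∈ range d, (x (i + 1) : ℕ) < ∑ i ∈ range d, (x i : ℕ) := by
      refine sum_lt_sum_of_nonempty (nonempty_range_iff.2 (NeZero.ne d)) fun i hi => ?_
      have := h i hi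
      simp only [descent] at this
      split_ifs at this with hi'
      · exact hi'
      · omega
    exact hlt.ne (sum_range_rotate x)
  calc cyclicDescents x < ∑ _i ∈ range d, 1 := sum_lt_sum (fun i _ => descent_le_one x i) hex
    _ = d := by simp

lemma cyclicDescents_eq_zero_iff (x : Fin d → Fin r) :
    cyclicDescents x = 0 ↔ ∃ a, x = Function.const (Fin d) a := by
  refine ⟨fun h => ⟨x 0, ?_⟩, ?_⟩
  · have hle : ∀ i ∈ range d, (x i : ℕ) ≤ x (i + 1) := fun i hi => by
      have := sum_eq_zero_iff.1 h i hi
      simp only [descent] at this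
      split_ifs at this with hi'
      exact not_lt.1 hi'
    have hstep := (sum_eq_sum_iff_of_le hle).1 (sum_range_rotate x).symm
    have hconst : ∀ i, i < d → x i = x 0 := by
      intro i
      induction i with
      | zero => simp
      | succ i ih =>
        intro hi
        rw [Nat.cast_succ, Fin.ext (hstep i (mem_range.2 (by omega))).symm, ih (by omega)]
    funext j
    rw [← Fin.cast_val_eq_self j, hconst j j.isLt, Function.const_apply]
  · rintro ⟨a, rfl⟩
    simp [cyclicDescents, descent]

variable {K : Type*} [Field K]

lemma sum_filter_cyclicDescents_eq_zero_of_ne_zero {ζ : K} (hζ : IsPrimitiveRoot ζ d) (ξ : K)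
    {t : ℕ} (ht0 : t ≠ 0) (htd : t < d) :
    ∑ x : Fin d → Fin r with cyclicDescents x = t, ζ ^ gam x * ξ ^ sig x = 0 := by
  set F : (Fin d → Fin r) → K := fun x => if cyclicDescents x = t then ζ ^ gam x * ξ ^ sig x else 0
  have htwist (x : Fin d → Fin r) : ζ ^ t * F (rotate x) = F x := by
    simp only [F, cyclicDescents_rotate, sig_rotate]
    split_ifs with hx
    · rw [← hx, ← mul_assoc, ← pow_add, add_comm,
        pow_eq_pow_of_modEq (gam_rotate_add_cyclicDescents_modEq x) hζ.pow_eq_one]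
    · rw [mul_zero]
  have hfix : ζ ^ t * ∑ x, F x = ∑ x, F x := by
    conv_lhs => rw [← rotate_bijective.sum_comp F, mul_sum]
    exact sum_congr rfl fun x _ => htwist x
  have hne : ζ ^ t - 1 ≠ 0 := sub_ne_zero.2 (hζ.pow_ne_one_of_pos_of_lt ht0 htd)
  rw [sum_filter]
  exact (mul_eq_zero.1 (by rw [sub_mul, one_mul, hfix, sub_self])).resolve_left hne

lemma sum_filter_cyclicDescents_eq_zero_eq_sum_pow (ζ ξ : K) :
    ∑ x : Fin d → Fin r with cyclicDescents x = 0, ζ ^ gam x * ξ ^ sig x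
      = ∑ a : Fin r, (ξ ^ d) ^ (a : ℕ) := by
  have hset : ({x | cyclicDescents x = 0} : Finset (Fin d → Fin r)) =
      univ.map ⟨Function.const (Fin d), Function.const_injective⟩ := by
    ext x
    simp only [mem_filter, mem_univ, true_and, mem_map, Function.Embedding.coeFn_mk,
      cyclicDescents_eq_zero_iff]
    exact exists_congr fun _ => eq_comm
  rw [hset, sum_map]
  refine sum_congr rfl fun a _ => ?_
  rw [Function.Embedding.coeFn_mk, gam_const, sig_const, pow_zero, one_mul, pow_mul]

theorem sum_pow_gam_mul_pow_sig_of_isPrimitiveRoot {ζ ξ : K} (hζ : IsPrimitiveRoot ζ d)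
    (hξ : ξ ^ r = 1) :
    ∑ x : Fin d → Fin r, ζ ^ gam x * ξ ^ sig x = if ξ ^ d = 1 then (r : K) else 0 := by
  rw [← sum_fiberwise_of_maps_to (g := cyclicDescents) (t := range d)
      fun x _ => mem_range.2 (cyclicDescents_lt x),
    sum_eq_single 0
      (fun t ht ht0 => sum_filter_cyclicDescents_eq_zero_of_ne_zero hζ ξ ht0 (mem_range.1 ht))
      (fun h => absurd (mem_range.2 (Nat.pos_of_neZero d)) h),
    sum_filter_cyclicDescents_eq_zero_eq_sum_pow, Fin.sum_univ_eq_sum_range (fun a => (ξ ^ d) ^ a)]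
  exact geom_sum_eq_ite_of_pow_eq_one (by rw [← pow_mul, mul_comm, pow_mul, hξ, one_pow])

end Rotation

-- `finProdFinEquiv (b, i) = i + d * b`, so this is the `b`-th consecutive block of length `d`.
def block (x : Fin (m * d) → Fin r) (b : Fin m) : Fin d → Fin r :=
  fun i => x (finProdFinEquiv (b, i))

lemma sig_eq_sum_sig_block (x : Fin (m * d) → Fin r) : sig x = ∑ b, sig (block x b) := by
  rw [sig, ← finProdFinEquiv.sum_comp, Fintype.sum_prod_type]
  rfl

lemma gam_modEq_sum_gam_block (x : Fin (m * d) → Fin r) :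
    gam x ≡ ∑ b, gam (block x b) [MOD d] := by
  unfold gam
  rw [← finProdFinEquiv.sum_comp, Fintype.sum_prod_type]
  refine Nat.ModEq.sum fun b _ => Nat.ModEq.sum fun i _ => ?_
  have hpos : ((finProdFinEquiv (b, i) : Fin (m * d)) : ℕ) = i + d * b :=
    finProdFinEquiv_apply_val _
  by_cases hi : (i : ℕ) + 1 < d
  · have hp : ((finProdFinEquiv (b, i) : Fin (m * d)) : ℕ) + 1 < m * d := by
      rw [hpos]
      nlinarith [b.isLt]
    have hnext : (⟨_ + 1, hp⟩ : Fin (m * d)) = finProdFinEquiv (b, ⟨i + 1, hi⟩) :=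
      Fin.ext (by simp only [finProdFinEquiv_apply_val]; ring)
    rw [dif_pos hp, dif_pos hi, hnext]
    split_ifs with h₁ h₂ h₂
    · rw [hpos]
      exact Nat.ModEq.add_right 1 (Nat.add_mul_mod_self_left i d b)
    · exact absurd h₁ h₂
    · exact absurd h₂ h₁
    · rfl
  · -- the descent across a block boundary sits at a multiple of `d`
    rw [dif_neg hi]
    split_ifs
    · rw [hpos, Nat.modEq_zero_iff_dvd]
      exact ⟨b + 1, by rw [mul_add, mul_one]; omega⟩
    · rfl
    · rfl

theorem sum_pow_gam_mul_pow_sig_eq_pow {R : Type*} [CommSemiring R] {n : ℕ} {ζ : R} (ξ : R)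
    (hζ : ζ ^ d = 1) (hn : n = m * d) :
    ∑ x : Fin n → Fin r, ζ ^ gam x * ξ ^ sig x
      = (∑ y : Fin d → Fin r, ζ ^ gam y * ξ ^ sig y) ^ m := by
  subst hn
  have hfactor (x : Fin (m * d) → Fin r) :
      ζ ^ gam x * ξ ^ sig x = ∏ b, ζ ^ gam (block x b) * ξ ^ sig (block x b) := by
    rw [prod_mul_distrib, prod_pow_eq_pow_sum, prod_pow_eq_pow_sum, ← sig_eq_sum_sig_block,
      pow_eq_pow_of_modEq (gam_modEq_sum_gam_block x) hζ]
  rw [← Fin.prod_const, Fintype.prod_sum]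
  exact Fintype.sum_equiv ((Equiv.arrowCongr finProdFinEquiv.symm (Equiv.refl _)).trans
    (Equiv.curry _ _ _)) _ _ hfactor

def charSumValue (n r j k : ℕ) : ℕ := if r ∣ k * (n / n.gcd j) then r ^ n.gcd j else 0

theorem sum_pow_mul_gam_mul_pow_mul_sig {K : Type*} [Field K] {n : ℕ} {ζ ξ : K}
    (hζ : IsPrimitiveRoot ζ n) (hn : n ≠ 0) (hξ : IsPrimitiveRoot ξ r) (j k : ℕ) :
    ∑ x : Fin n → Fin r, ζ ^ (j * gam x) * ξ ^ (k * sig x) = charSumValue n r j k := by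
  have hg : 0 < n.gcd j := Nat.gcd_pos_of_pos_left j (Nat.pos_of_ne_zero hn)
  have hprim : IsPrimitiveRoot (ζ ^ j) (n / n.gcd j) := hζ.pow_div_gcd hn j
  have : NeZero (n / n.gcd j) :=
    ⟨(Nat.div_ne_zero_iff_of_dvd (Nat.gcd_dvd_left n j)).2 ⟨hn, hg.ne'⟩⟩
  have hcond : (ξ ^ k) ^ (n / n.gcd j) = 1 ↔ r ∣ k * (n / n.gcd j) := by
    rw [← pow_mul, hξ.pow_eq_one_iff_dvd]
  simp_rw [pow_mul]
  rw [sum_pow_gam_mul_pow_sig_eq_pow (ξ ^ k) hprim.pow_eq_one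
      (Nat.mul_div_cancel' (Nat.gcd_dvd_left n j)).symm,
    sum_pow_gam_mul_pow_sig_of_isPrimitiveRoot hprim
      (by rw [← pow_mul, mul_comm, pow_mul, hξ.pow_eq_one, one_pow]), charSumValue]
  push_cast
  simp only [hcond, ite_pow, zero_pow hg.ne']

lemma sum_charSumValue {n : ℕ} (hn : n ≠ 0) (hr : 0 < r) :
    ∑ j ∈ range n, ∑ k ∈ range r, charSumValue n r j k
      = ∑ d ∈ n.divisors, Nat.totient d * r ^ (n / d) * r.gcd d := by
  simp only [charSumValue, sum_ite, sum_const_zero, add_zero, sum_const,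
    Nat.card_filter_range_dvd_mul hr, smul_eq_mul]
  rw [Nat.sum_range_gcd_eq_sum_divisors hn (fun e => r.gcd (n / e) * r ^ e)]
  refine sum_congr rfl fun d hd => ?_
  rw [Nat.div_div_self (Nat.dvd_of_mem_divisors hd) hn, smul_eq_mul]
  ring

end Tenengolts

theorem stmt_6 (n r : ℕ) (hn : 0 < n) (hr : 0 < r) :
    (∀ a₁ a₂ : ℕ, a₁ < n → a₂ < r → (Tcode n r a₁ a₂).card ≤ (Tcode n r 0 0).card) ∧
    (((Tcode n r 0 0).card : ℂ)
      = (1 / ((n : ℂ) * (r : ℂ))) *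
          ∑ d ∈ n.divisors, (Nat.totient d : ℂ) * (r : ℂ) ^ (n / d) * (Nat.gcd r d : ℂ)) := by
  obtain ⟨ζ, hζ⟩ : ∃ ζ : ℂ, IsPrimitiveRoot ζ n := ⟨_, Complex.isPrimitiveRoot_exp n hn.ne'⟩
  obtain ⟨ξ, hξ⟩ : ∃ ξ : ℂ, IsPrimitiveRoot ξ r := ⟨_, Complex.isPrimitiveRoot_exp r hr.ne'⟩
  have hchar := Tenengolts.sum_pow_mul_gam_mul_pow_mul_sig hζ hn.ne' hξ
  refine ⟨fun a₁ a₂ _ _ => card_filter_modEq_le hζ hξ hn hr gam sig _ hchar a₁ a₂, ?_⟩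
  have h00 := card_filter_modEq_mul_eq hζ hξ (gam (n := n) (r := r)) sig 0 0
  simp only [mul_zero, pow_zero, inv_one, one_mul, hchar] at h00
  rw [one_div, eq_inv_mul_iff_mul_eq₀ (by exact_mod_cast (Nat.mul_pos hn hr).ne'), mul_comm,
    Tcode, h00]
  exact_mod_cast Tenengolts.sum_charSumValue hn.ne' hr
end

section
/- Let a, b, d be nonnegative integers with d ≥ 1 and d | (a+b), and let η ∈ ℂ be a primitive d-th root of unity. Let S(a,b) := { x ∈ {0,1}^{a+b} : τ_0(x) = a and τ_1(x) = b }. Then ∑_{x ∈ S(a,b)} η^{γ(x)} = binom((a+b)/d, a/d) if d | a and d | b, and equals 0 otherwise. (Equivalently, the Gaussian binomial coefficient [a+b choose a]_q evaluated at q = η equals binom((a+b)/d, a/d)·𝟙{d|a}·𝟙{d|b}.) -/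
open scoped Classical
open Finset

/-- `τ_j(x)` : the number of components of `x` equal to `j`. -/
noncomputable def tau {n r : ℕ} (j : Fin r) (x : Fin n → Fin r) : ℕ :=
  (Finset.univ.filter (fun i => x i = j)).card


noncomputable def Gc (η : ℂ) : ℕ → ℕ → ℂ
  | 0, 0 => 1
  | 0, _+1 => 0
  | _+1, 0 => 1
  | n+1, k+1 => Gc η n k + η^(k+1) * Gc η n (k+1)

lemma Gc_zero_right (η : ℂ) (n : ℕ) : Gc η n 0 = 1 := by
  cases n <;> rfl

lemma Gc_succ_succ (η : ℂ) (n k : ℕ) :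
    Gc η (n+1) (k+1) = Gc η n k + η^(k+1) * Gc η n (k+1) := rfl

lemma Gc_eq_zero (η : ℂ) : ∀ n k, n < k → Gc η n k = 0 := by
  intro n
  induction n with
  | zero => intro k hk; match k, hk with | k+1, _ => rfl
  | succ n ih =>
    intro k hk
    match k, hk with
    | k+1, hk =>
      rw [Gc_succ_succ, ih k (by omega), ih (k+1) (by omega)]
      ring

lemma Gc_diag (η : ℂ) : ∀ n, Gc η n n = 1 := by
  intro n
  induction n with
  | zero => rfl
  | succ n ih => rw [Gc_succ_succ, ih, Gc_eq_zero η n (n+1) (by omega)]; ring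

lemma Gc_A (η : ℂ) : ∀ n k, (1 - η^(n-k)) * Gc η n k = (1 - η^(k+1)) * Gc η n (k+1) := by
  intro n
  induction n with
  | zero =>
    intro k
    match k with
    | 0 => simp [Gc_zero_right, Gc_eq_zero η 0 1 (by omega)]
    | k+1 => rw [Gc_eq_zero η 0 (k+1) (by omega), Gc_eq_zero η 0 (k+2) (by omega)]; ring
  | succ n ih =>
    intro k
    match k with
    | 0 =>
      have h1 := ih 0
      rw [Gc_zero_right, Nat.sub_zero] at h1
      rw [Gc_zero_right, Nat.sub_zero, Gc_succ_succ, Gc_zero_right]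
      rw [pow_one] at h1 ⊢
      linear_combination η * h1
    | k+1 =>
      by_cases hk : n < k + 1
      · have hz : Gc η (n+1) (k+2) = 0 := Gc_eq_zero η _ _ (by omega)
        rw [hz, mul_zero]
        rcases Nat.lt_or_ge n k with h | h
        · rw [Gc_eq_zero η (n+1) (k+1) (by omega), mul_zero]
        · have : n = k := by omega
          subst this
          rw [Nat.sub_self, pow_zero, sub_self, zero_mul]
      · obtain ⟨j, rfl⟩ : ∃ j, n = k + 1 + j := ⟨n - (k+1), by omega⟩
        have h1 := ih k
        have h2 := ih (k+1)
        have e1 : k + 1 + j - k = j + 1 := by omega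
        have e2 : k + 1 + j - (k+1) = j := by omega
        have e3 : k + 1 + j + 1 - (k+1) = j + 1 := by omega
        rw [e1] at h1
        rw [e2] at h2
        rw [e3, Gc_succ_succ, Gc_succ_succ]
        linear_combination h1 + η^(k+2) * h2

/-- the "B" identity: three-term-recursion helper. -/
lemma Gc_B (η : ℂ) (k b : ℕ) :
    (η^(b+1) - 1) * Gc η (k+1) (b+1) = (η^(k+1) - 1) * Gc η k b := by
  by_cases hb : k < b
  · rw [Gc_eq_zero η k b hb, Gc_eq_zero η (k+1) (b+1) (by omega)]; ring
  · obtain ⟨j, rfl⟩ : ∃ j, k = b + j := ⟨k - b, by omega⟩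
    have hA := Gc_A η (b + j) b
    have e : b + j - b = j := by omega
    rw [e] at hA
    rw [Gc_succ_succ]
    linear_combination η^(b+1) * hA

section
variable {d : ℕ} {η : ℂ} (hd : 0 < d) (hη₁ : η ^ d = 1)
  (hη₂ : ∀ k : ℕ, 1 ≤ k → k ≤ d - 1 → η ^ k ≠ 1)

omit hd hη₂ in
include hη₁ in
lemma eta_pow_mod (x : ℕ) : η ^ x = η ^ (x % d) := by
  conv_lhs => rw [← Nat.div_add_mod x d]
  rw [pow_add, pow_mul, hη₁, one_pow, one_mul]

include hd hη₁ hη₂ in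
lemma Gc_d_zero : ∀ k, 1 ≤ k → k ≤ d - 1 → Gc η d k = 0 := by
  intro k
  induction k with
  | zero => omega
  | succ k ih =>
    intro _ hk2
    have hA := Gc_A η d k
    rcases Nat.eq_zero_or_pos k with rfl | hk
    · rw [Nat.sub_zero, Gc_zero_right, hη₁] at hA
      have hne : (1 : ℂ) - η ^ (0+1) ≠ 0 := by
        intro h
        exact hη₂ 1 le_rfl (by omega) (sub_eq_zero.mp h).symm
      have := hA.symm
      rw [sub_self, zero_mul] at hA
      exact (mul_eq_zero.mp hA.symm).resolve_left hne
    · rw [ih hk (by omega), mul_zero] at hA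
      have hne : (1 : ℂ) - η ^ (k+1) ≠ 0 := by
        intro h
        exact hη₂ (k+1) (by omega) (by omega) (sub_eq_zero.mp h).symm
      exact (mul_eq_zero.mp hA.symm).resolve_left hne

include hd in
lemma succ_mod_lt {x : ℕ} (h : x % d + 1 < d) :
    (x+1) % d = x % d + 1 ∧ (x+1) / d = x / d := by
  have h0 : d * (x / d) + x % d = x := Nat.div_add_mod x d
  have hx : x + 1 = d * (x / d) + (x % d + 1) := by omega
  constructor
  · rw [hx, Nat.mul_add_mod, Nat.mod_eq_of_lt h]
  · rw [hx, Nat.mul_add_div hd, Nat.div_eq_of_lt h]; omega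

include hd in
lemma succ_mod_eq {x : ℕ} (h : x % d + 1 = d) :
    (x+1) % d = 0 ∧ (x+1) / d = x / d + 1 := by
  have h0 : d * (x / d) + x % d = x := Nat.div_add_mod x d
  have hx : x + 1 = d * (x / d + 1) := by ring_nf; omega
  constructor
  · rw [hx, Nat.mul_mod_right]
  · rw [hx, Nat.mul_div_cancel_left _ hd]

include hd hη₁ hη₂ in
lemma Gc_lucas : ∀ m b, Gc η m b =
    (Nat.choose (m/d) (b/d) : ℂ) * Gc η (m % d) (b % d) := by
  intro m
  induction m with
  | zero =>
    intro b
    rcases Nat.eq_zero_or_pos b with rfl | hb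
    · simp [Gc_zero_right]
    · rw [Gc_eq_zero η 0 b hb, Nat.zero_div, Nat.zero_mod]
      rcases Nat.eq_zero_or_pos (b % d) with hbd | hbd
      · rw [hbd, Gc_zero_right, mul_one]
        have hdb : d ∣ b := Nat.dvd_of_mod_eq_zero hbd
        have : 0 < b / d := Nat.div_pos (Nat.le_of_dvd hb hdb) hd
        rw [Nat.choose_eq_zero_of_lt this]
        norm_num
      · rw [Gc_eq_zero η 0 (b % d) hbd, mul_zero]
  | succ m ih =>
    intro b
    match b with
    | 0 => simp [Gc_zero_right]
    | b+1 =>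
      have hGc : Gc η (m+1) (b+1) = Gc η m b + η^(b+1) * Gc η m (b+1) :=
        Gc_succ_succ η m b
      have hmd : m % d < d := Nat.mod_lt _ hd
      have hbd : b % d < d := Nat.mod_lt _ hd
      rw [hGc, ih b, ih (b+1), eta_pow_mod hη₁ (b+1)]
      by_cases hs : b % d + 1 < d
      · obtain ⟨hb1, hb2⟩ := succ_mod_lt hd hs
        rw [hb1, hb2]
        by_cases hr : m % d + 1 < d
        · obtain ⟨hm1, hm2⟩ := succ_mod_lt hd hr
          rw [hm1, hm2, Gc_succ_succ]
          ring
        · have hr' : m % d + 1 = d := by omega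
          obtain ⟨hm1, hm2⟩ := succ_mod_eq hd hr'
          rw [hm1, hm2]
          have hDz : Gc η d (b % d + 1) = 0 :=
            Gc_d_zero hd hη₁ hη₂ (b % d + 1) (by omega) (by omega)
          have : Gc η (m % d) (b % d) + η^(b % d + 1) * Gc η (m % d) (b % d + 1)
              = Gc η d (b % d + 1) := by
            have h5 := Gc_succ_succ η (m % d) (b % d)
            rw [hr'] at h5
            exact h5.symm
          rw [Gc_eq_zero η 0 (b % d + 1) (by omega)]
          rw [mul_zero]
          linear_combination ((m/d).choose (b/d) : ℂ) * this +
            ((m/d).choose (b/d) : ℂ) * hDz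
      · have hs' : b % d + 1 = d := by omega
        obtain ⟨hb1, hb2⟩ := succ_mod_eq hd hs'
        rw [hb1, hb2, pow_zero]
        have hd1 : b % d = d - 1 := by omega
        by_cases hr : m % d + 1 < d
        · obtain ⟨hm1, hm2⟩ := succ_mod_lt hd hr
          rw [hm1, hm2]
          rw [Gc_eq_zero η (m % d) (b % d) (by omega), Gc_zero_right,
            Gc_zero_right]
          ring
        · have hr' : m % d + 1 = d := by omega
          obtain ⟨hm1, hm2⟩ := succ_mod_eq hd hr'
          rw [hm1, hm2]
          have : m % d = b % d := by omega
          rw [this, Gc_diag, Gc_zero_right, Gc_zero_right]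
          rw [Nat.choose_succ_succ (m/d) (b/d)]
          push_cast
          ring

lemma gam_snoc {m r : ℕ} (y : Fin (m+1) → Fin r) (c : Fin r) :
    gam (Fin.snoc y c) = gam y +
      if (c : ℕ) < (y (Fin.last m) : ℕ) then m + 1 else 0 := by
  have hsn : ∀ (i : ℕ) (h : i < m + 1),
      (Fin.snoc y c : Fin (m+2) → Fin r) ⟨i, by omega⟩ = y ⟨i, h⟩ := by
    intro i h
    have : (⟨i, by omega⟩ : Fin (m+2)) = Fin.castSucc ⟨i, h⟩ := rfl
    rw [this, Fin.snoc_castSucc]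
  have hlast : (Fin.snoc y c : Fin (m+2) → Fin r) ⟨m+1, by omega⟩ = c := by
    have : (⟨m+1, by omega⟩ : Fin (m+2)) = Fin.last (m+1) := rfl
    rw [this, Fin.snoc_last]
  unfold gam
  rw [Fin.sum_univ_castSucc (n := m+1)]
  conv_lhs => rw [Fin.sum_univ_castSucc (n := m)]
  conv_rhs => rw [Fin.sum_univ_castSucc (n := m)]
  simp only [Fin.coe_castSucc, Fin.val_last, Fin.snoc_castSucc]
  rw [dif_neg (by omega : ¬(m + 1 + 1 < m + 1 + 1))]
  rw [dif_neg (by omega : ¬(m + 1 < m + 1))]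
  rw [dif_pos (by omega : m + 1 < m + 1 + 1)]
  rw [hlast]
  rw [add_zero, add_zero]
  congr 1
  apply Finset.sum_congr rfl
  intro i _
  rw [dif_pos (by omega : (i : ℕ) + 1 < m + 1 + 1), dif_pos (by omega : (i : ℕ) + 1 < m + 1)]
  rw [hsn ((i : ℕ)+1) (by omega)]

lemma tau_eq_sum {n r : ℕ} (j : Fin r) (x : Fin n → Fin r) :
    tau j x = ∑ i : Fin n, if x i = j then 1 else 0 := by
  rw [tau, Finset.card_filter]

lemma tau_snoc {m r : ℕ} (j : Fin r) (y : Fin m → Fin r) (c : Fin r) :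
    tau j (Fin.snoc y c) = tau j y + if c = j then 1 else 0 := by
  rw [tau_eq_sum, tau_eq_sum, Fin.sum_univ_castSucc]
  simp [Fin.snoc_castSucc, Fin.snoc_last]

lemma tau_add {m : ℕ} (x : Fin m → Fin 2) : tau 0 x + tau 1 x = m := by
  rw [tau_eq_sum, tau_eq_sum, ← Finset.sum_add_distrib]
  have : ∀ i : Fin m,
      ((if x i = 0 then 1 else 0) + if x i = 1 then 1 else 0) = 1 := by
    intro i
    rcases Fin.exists_fin_two.mp ⟨x i, rfl⟩ with h | h <;> simp [h]
  simp only [this, Finset.sum_const, Finset.card_univ, Fintype.card_fin, smul_eq_mul, mul_one]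

/-- the maj generating function over binary words of length m with b ones -/
noncomputable def FF (η : ℂ) (m b : ℕ) : ℂ :=
  ∑ x ∈ Finset.univ.filter (fun x : Fin m → Fin 2 => tau 1 x = b), η ^ gam x

lemma FF_eq_sum_ite (η : ℂ) (m b : ℕ) :
    FF η m b = ∑ x : Fin m → Fin 2, if tau 1 x = b then η ^ gam x else 0 := by
  rw [FF, Finset.sum_filter]

lemma sum_snoc (m : ℕ) (f : (Fin (m+1) → Fin 2) → ℂ) :
    ∑ x : Fin (m+1) → Fin 2, f x
      = ∑ y : Fin m → Fin 2, (f (Fin.snoc y 0) + f (Fin.snoc y 1)) := by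
  rw [← Equiv.sum_comp (Fin.snocEquiv (fun _ => Fin 2)) f, Fintype.sum_prod_type]
  rw [Finset.sum_comm]
  apply Finset.sum_congr rfl
  intro y _
  rw [Fin.sum_univ_two]
  rfl

lemma gam_zero_len {r : ℕ} (x : Fin 0 → Fin r) : gam x = 0 := by simp [gam]

lemma gam_one_len {r : ℕ} (x : Fin 1 → Fin r) : gam x = 0 := by simp [gam]

lemma tau_zero_len {r : ℕ} (j : Fin r) (x : Fin 0 → Fin r) : tau j x = 0 := by
  simp [tau]

lemma FF_zero (η : ℂ) (b : ℕ) : FF η 0 b = if b = 0 then 1 else 0 := by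
  rw [FF_eq_sum_ite]
  rw [Fintype.sum_eq_single (fun i : Fin 0 => (0 : Fin 2))
    (fun x hx => absurd (funext fun i => i.elim0) hx)]
  rw [tau_zero_len, gam_zero_len, pow_zero]
  by_cases hb : b = 0 <;> simp [hb, eq_comm]

lemma FF_one (η : ℂ) (b : ℕ) : FF η 1 b = if b ≤ 1 then 1 else 0 := by
  rw [FF_eq_sum_ite]
  rw [← Equiv.sum_comp (Equiv.funUnique (Fin 1) (Fin 2)).symm]
  rw [Fin.sum_univ_two]
  have t0 : tau 1 ((Equiv.funUnique (Fin 1) (Fin 2)).symm 0) = 0 := by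
    simp [tau, Equiv.funUnique]
  have t1 : tau 1 ((Equiv.funUnique (Fin 1) (Fin 2)).symm 1) = 1 := by
    simp [tau, Equiv.funUnique]
  rw [t0, t1, gam_one_len, gam_one_len, pow_zero]
  rcases Nat.lt_or_ge b 2 with h | h
  · interval_cases b <;> simp
  · rw [if_neg (by omega), if_neg (by omega), if_neg (by omega)]
    ring

lemma fin2_cases (v : Fin 2) : v = 0 ∨ v = 1 :=
  Fin.exists_fin_two.mp ⟨v, rfl⟩

lemma tau1_zero_iff {m : ℕ} (x : Fin m → Fin 2) :
    tau 1 x = 0 ↔ x = fun _ => 0 := by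
  rw [tau, Finset.card_eq_zero, Finset.filter_eq_empty_iff]
  constructor
  · intro h
    funext i
    rcases fin2_cases (x i) with h0 | h1
    · exact h0
    · exact absurd h1 (h (Finset.mem_univ i))
  · intro h i _
    rw [h]
    intro hh
    simp at hh

lemma gam_const_zero {m : ℕ} : gam (fun _ : Fin m => (0 : Fin 2)) = 0 := by
  simp [gam]

lemma FF_bzero (η : ℂ) (m : ℕ) : FF η m 0 = 1 := by
  rw [FF_eq_sum_ite]
  rw [Fintype.sum_eq_single (fun _ : Fin m => (0 : Fin 2))]
  · rw [if_pos ((tau1_zero_iff _).mpr rfl), gam_const_zero, pow_zero]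
  · intro x hx
    rw [if_neg]
    intro h
    exact hx ((tau1_zero_iff x).mp h)

lemma FF_last_one (η : ℂ) (k b : ℕ) :
    ∑ y : Fin (k+1) → Fin 2,
      (if tau 1 y = b + 1 ∧ y (Fin.last k) = 1 then η ^ gam y else 0)
    = FF η k b := by
  match k with
  | 0 =>
    rw [← Equiv.sum_comp (Equiv.funUnique (Fin 1) (Fin 2)).symm, Fin.sum_univ_two,
      FF_zero]
    have t0 : tau 1 ((Equiv.funUnique (Fin 1) (Fin 2)).symm 0) = 0 := by
      simp [tau, Equiv.funUnique]
    have t1 : tau 1 ((Equiv.funUnique (Fin 1) (Fin 2)).symm 1) = 1 := by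
      simp [tau, Equiv.funUnique]
    have g1 : gam ((Equiv.funUnique (Fin 1) (Fin 2)).symm 1) = 0 := by
      simp [gam]
    rw [t0, t1, g1]
    have e0 : ((Equiv.funUnique (Fin 1) (Fin 2)).symm 0) (Fin.last 0) = 0 := rfl
    have e1 : ((Equiv.funUnique (Fin 1) (Fin 2)).symm 1) (Fin.last 0) = 1 := rfl
    rw [e0, e1]
    rcases Nat.eq_zero_or_pos b with rfl | hb
    · norm_num
    · rw [if_neg (by omega), if_neg (by simp; omega), if_neg (by omega)]
      norm_num
  | j+1 =>
    rw [sum_snoc, FF_eq_sum_ite]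
    apply Finset.sum_congr rfl
    intro z _
    have i1 : (if (1:Fin 2) = (1:Fin 2) then (1:ℕ) else 0) = 1 := if_pos rfl
    have hl0 : (Fin.snoc z (0 : Fin 2) : Fin (j+2) → Fin 2) (Fin.last (j+1)) = 0 := by simp
    have hl1 : (Fin.snoc z (1 : Fin 2) : Fin (j+2) → Fin 2) (Fin.last (j+1)) = 1 := by simp
    rw [if_neg (fun hh => by rw [hl0] at hh; exact absurd hh.2 (by decide))]
    rw [tau_snoc, gam_snoc, hl1, i1]
    have hz : ¬ ((1:Fin 2) : ℕ) < ((z (Fin.last j)) : ℕ) := by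
      rw [Fin.val_one]
      have := (z (Fin.last j)).isLt
      omega
    rw [if_neg hz, add_zero, zero_add]
    by_cases ht : tau 1 z = b
    · rw [if_pos ⟨by omega, rfl⟩, if_pos ht]
    · rw [if_neg (fun hh => ht (by omega)), if_neg ht]

lemma FF_rec (η : ℂ) (k b : ℕ) :
    FF η (k+2) (b+1) = FF η (k+1) b + FF η (k+1) (b+1)
      + (η^(k+1) - 1) * FF η k b := by
  have key : ∀ y : Fin (k+1) → Fin 2,
      (if tau 1 (Fin.snoc y (0:Fin 2)) = b+1 then η ^ gam (Fin.snoc y (0:Fin 2)) else 0)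
      + (if tau 1 (Fin.snoc y (1:Fin 2)) = b+1 then η ^ gam (Fin.snoc y (1:Fin 2)) else 0)
      = (if tau 1 y = b+1 then η ^ gam y else 0)
        + (if tau 1 y = b then η ^ gam y else 0)
        + (η^(k+1) - 1) *
          (if tau 1 y = b+1 ∧ y (Fin.last k) = 1 then η ^ gam y else 0) := by
    intro y
    have i0 : (if (0:Fin 2) = (1:Fin 2) then (1:ℕ) else 0) = 0 := if_neg (by decide)
    have i1 : (if (1:Fin 2) = (1:Fin 2) then (1:ℕ) else 0) = 1 := if_pos rfl
    rw [tau_snoc, tau_snoc, gam_snoc, gam_snoc, i0, i1, add_zero]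
    rcases fin2_cases (y (Fin.last k)) with h | h <;> rw [h] <;>
      simp only [Fin.val_zero, Fin.val_one, Nat.lt_irrefl, Nat.lt_one_iff,
        Nat.zero_lt_one, if_true, if_false] <;>
      by_cases ht : tau 1 y = b + 1 <;> by_cases hb : tau 1 y = b <;>
      simp [ht, hb, pow_add, h] <;> first | ring | omega
  rw [FF_eq_sum_ite, sum_snoc]
  rw [Finset.sum_congr rfl (fun y _ => key y)]
  rw [Finset.sum_add_distrib, Finset.sum_add_distrib, ← Finset.mul_sum]
  rw [FF_last_one, ← FF_eq_sum_ite, ← FF_eq_sum_ite]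
  ring

lemma FF_eq_Gc (η : ℂ) : ∀ m b, FF η m b = Gc η m b := by
  intro m
  induction m using Nat.strong_induction_on with
  | _ m ih =>
    match m with
    | 0 =>
      intro b
      rw [FF_zero]
      match b with
      | 0 => rfl
      | b+1 => rfl
    | 1 =>
      intro b
      rw [FF_one]
      match b with
      | 0 => rw [if_pos (by omega), Gc_zero_right]
      | 1 =>
        rw [if_pos (by omega), Gc_succ_succ, Gc_zero_right,
          Gc_eq_zero η 0 1 (by omega)]
        ring
      | b+2 =>
        rw [if_neg (by omega), Gc_eq_zero η 1 (b+2) (by omega)]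
    | k+2 =>
      intro b
      match b with
      | 0 => rw [FF_bzero, Gc_zero_right]
      | b+1 =>
        rw [FF_rec, ih (k+1) (by omega) b, ih (k+1) (by omega) (b+1),
          ih k (by omega) b,
          show Gc η (k+2) (b+1) = Gc η (k+1) b + η^(b+1) * Gc η (k+1) (b+1)
            from Gc_succ_succ η (k+1) b]
        linear_combination (-1 : ℂ) * Gc_B η k b

theorem stmt_9 (a b d : ℕ) (hd : 0 < d) (hdvd : d ∣ (a + b))
    (η : ℂ) (hη₁ : η ^ d = 1) (hη₂ : ∀ k : ℕ, 1 ≤ k → k ≤ d - 1 → η ^ k ≠ 1) :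
    ∑ x ∈ Finset.univ.filter (fun x : Fin (a + b) → Fin 2 => tau 0 x = a ∧ tau 1 x = b),
        η ^ gam x
      = if d ∣ a ∧ d ∣ b then (Nat.choose ((a + b) / d) (a / d) : ℂ) else 0 := by
  have hfil : Finset.univ.filter
        (fun x : Fin (a + b) → Fin 2 => tau 0 x = a ∧ tau 1 x = b)
      = Finset.univ.filter (fun x : Fin (a + b) → Fin 2 => tau 1 x = b) := by
    apply Finset.filter_congr
    intro x _
    constructor
    · exact fun h => h.2
    · intro h
      exact ⟨by have := tau_add x; omega, h⟩
  rw [hfil]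
  rw [show (∑ x ∈ Finset.univ.filter (fun x : Fin (a+b) → Fin 2 => tau 1 x = b),
        η ^ gam x) = Gc η (a+b) b from FF_eq_Gc η (a+b) b]
  rw [Gc_lucas hd hη₁ hη₂ (a+b) b]
  have hm0 : (a+b) % d = 0 := (Nat.dvd_iff_mod_eq_zero.mp hdvd)
  rw [hm0]
  by_cases hb : d ∣ b
  · have hb0 : b % d = 0 := (Nat.dvd_iff_mod_eq_zero.mp hb)
    have ha : d ∣ a := (Nat.dvd_add_iff_left hb).mpr hdvd
    rw [hb0, if_pos ⟨ha, hb⟩, Gc_zero_right, mul_one]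
    congr 1
    obtain ⟨a1, rfl⟩ := ha
    obtain ⟨b1, rfl⟩ := hb
    rw [← Nat.left_distrib, Nat.mul_div_cancel_left _ hd,
      Nat.mul_div_cancel_left _ hd, Nat.mul_div_cancel_left _ hd]
    have h2 : (a1 + b1).choose (a1 + b1 - b1) = (a1 + b1).choose b1 :=
      Nat.choose_symm (by omega)
    have h3 : a1 + b1 - b1 = a1 := by omega
    rw [h3] at h2
    exact h2.symm
  · have hb0 : b % d ≠ 0 := fun h => hb (Nat.dvd_of_mod_eq_zero h)
    rw [if_neg (fun hc => hb hc.2)]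
    rw [Gc_eq_zero η 0 (b % d) (Nat.pos_of_ne_zero hb0), mul_zero]
end
end

section
/- Let n, r be positive integers, u_1 ∈ {0,…,n−1}, u_2 ∈ {0,…,r−1}, and w_0, …, w_{r−1} ∈ ℂ. Let g := gcd(n, u_1) (with gcd(n,0) = n). Then ∑_{x ∈ {0,…,r−1}^n} e(u_1/n)^{γ(x)} · e(u_2/r)^{σ(x)} · ∏_{i=0}^{r−1} w_i^{τ_i(x)} = ( ∑_{i=0}^{r−1} w_i^{n/g} · e( i·n·u_2 / (g·r) ) )^{g}. -/
/-!
Write `q = e(u₁/n)`, a primitive `m`-th root of unity with `m = n / g`, and absorb `e(u₂/r) ^ σ`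
into the weights, `v i = w i * e(u₂/r) ^ i`. Cut a word of length `n = g * m` into `g` blocks of
length `m`: modulo `m`, the descent positions of the word are those of its blocks, plus
multiples of `m`, so the sum factors as the `g`-th power of the sum over words of length `m`.
For these, rotating a word by `k` multiplies `q ^ γ` by `(q ^ c) ^ k`, where `c < m` is the
number of cyclic descents; averaging over all rotations leaves only the constant words, which
contribute `∑ v i ^ m`.
-/

open scoped Classical
open Finset

lemma expu_natCast_mul (k : ℕ) (x : ℝ) : expu (k * x) = expu x ^ k := by
  rw [expu, expu, ← Complex.exp_nat_mul]
  push_cast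
  ring_nf

lemma isPrimitiveRoot_expu_div {n : ℕ} (hn : 0 < n) (u : ℕ) :
    IsPrimitiveRoot (expu (u / n)) (n / n.gcd u) := by
  have hg : 0 < n.gcd u := Nat.gcd_pos_of_pos_left u hn
  have hm : n / n.gcd u ≠ 0 := (Nat.div_pos (Nat.gcd_le_left u hn) hg).ne'
  have hcop : (u / n.gcd u).Coprime (n / n.gcd u) := (Nat.coprime_div_gcd_div_gcd hg).symm
  convert Complex.isPrimitiveRoot_exp_of_coprime _ _ hm hcop using 3
  have hg0 : (n.gcd u : ℂ) ≠ 0 := Nat.cast_ne_zero.2 hg.ne'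
  rw [Nat.cast_div (Nat.gcd_dvd_right n u) hg0, Nat.cast_div (Nat.gcd_dvd_left n u) hg0,
    div_div_div_cancel_right₀ hg0, expu]
  push_cast
  rfl

section CyclicWords

variable {M : Type*} [CommMonoid M] {r m : ℕ}

lemma pow_val_add {q : M} (hq : q ^ m = 1) (a b : Fin m) :
    q ^ ((a + b : Fin m) : ℕ) = q ^ (a : ℕ) * q ^ (b : ℕ) := by
  rw [Fin.val_add, ← pow_eq_pow_mod _ hq, pow_add]

variable [NeZero m]

/-- Read cyclically, the descent at the last position gets weight `0`. -/
lemma gam_eq_sum_val_add_one (y : Fin m → Fin r) :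
    gam y = ∑ j : Fin m, if y (j + 1) < y j then ((j + 1 : Fin m) : ℕ) else 0 := by
  refine sum_congr rfl fun j _ => ?_
  have hval : ((j + 1 : Fin m) : ℕ) = (j + 1) % m := by
    rw [Fin.val_add, Fin.val_one', Nat.add_mod_mod]
  by_cases h : (j : ℕ) + 1 < m
  · have hj : (⟨j + 1, h⟩ : Fin m) = j + 1 := by
      ext; rw [hval, Nat.mod_eq_of_lt h]
    rw [dif_pos h, hj, hval, Nat.mod_eq_of_lt h]
    rfl
  · have hj : (j : ℕ) + 1 = m := by omega
    rw [dif_neg h, hval, hj, Nat.mod_self, ite_self]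

lemma pow_gam_eq_prod (q : M) (y : Fin m → Fin r) :
    q ^ gam y = ∏ j : Fin m, if y (j + 1) < y j then q ^ ((j + 1 : Fin m) : ℕ) else 1 := by
  rw [gam_eq_sum_val_add_one, ← prod_pow_eq_pow_sum]
  exact prod_congr rfl fun j _ => by split_ifs <;> simp

lemma gam_const (i : Fin r) : gam (fun _ : Fin m => i) = 0 := by
  simp [gam_eq_sum_val_add_one]

def cyclicDescentCount (y : Fin m → Fin r) : ℕ := #{j | y (j + 1) < y j}

/-- Rotating a word by `k` shifts every cyclic descent position by `k`. -/
lemma pow_gam_rotate {q : M} (hq : q ^ m = 1) (y : Fin m → Fin r) (k : Fin m) :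
    q ^ gam (fun j => y (j - k)) = (q ^ cyclicDescentCount y) ^ (k : ℕ) * q ^ gam y := by
  have hreindex : (∏ j : Fin m, if y (j - k + 1) < y (j - k) then q ^ ((j + 1 : Fin m) : ℕ) else 1)
      = ∏ i : Fin m, if y (i + 1) < y i then q ^ ((i + 1 + k : Fin m) : ℕ) else 1 := by
    refine (Fintype.prod_equiv (Equiv.addRight k) _ _ fun i => ?_).symm
    rw [Equiv.coe_addRight, add_sub_cancel_right, add_right_comm]
  have hsplit : ∀ i : Fin m, (if y (i + 1) < y i then q ^ ((i + 1 + k : Fin m) : ℕ) else 1) =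
      (if y (i + 1) < y i then q ^ (k : ℕ) else 1) *
        (if y (i + 1) < y i then q ^ ((i + 1 : Fin m) : ℕ) else 1) := fun i => by
    rw [pow_val_add hq, mul_comm]
    split_ifs <;> simp
  have hcount : (∏ i : Fin m, if y (i + 1) < y i then q ^ (k : ℕ) else 1) =
      (q ^ cyclicDescentCount y) ^ (k : ℕ) := by
    rw [← prod_filter, prod_const, ← pow_mul, mul_comm, pow_mul]
    rfl
  simp only [pow_gam_eq_prod, sub_add_eq_add_sub] at hreindex ⊢
  rw [hreindex, prod_congr rfl fun i _ => hsplit i, prod_mul_distrib, hcount]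

lemma sum_val_add_one (y : Fin m → Fin r) : ∑ j, (y (j + 1) : ℕ) = ∑ j, (y j : ℕ) :=
  Fintype.sum_equiv (Equiv.addRight 1) _ _ fun _ => rfl

lemma cyclicDescentCount_lt (y : Fin m → Fin r) : cyclicDescentCount y < m := by
  have hle : cyclicDescentCount y ≤ m := (card_filter_le _ _).trans (by simp)
  refine hle.lt_of_ne fun h => ?_
  have hdesc : ∀ j, y (j + 1) < y j := fun j =>
    card_filter_eq_iff.1 (h.trans (card_fin m).symm) j (mem_univ _)
  exact (sum_val_add_one y).not_lt (sum_lt_sum_of_nonempty univ_nonempty fun j _ => hdesc j)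

open Fin.NatCast in
lemma eq_of_cyclicDescentCount_eq_zero {y : Fin m → Fin r} (h : cyclicDescentCount y = 0)
    (j : Fin m) : y j = y 0 := by
  have hle : ∀ j, (y j : ℕ) ≤ y (j + 1) := fun j =>
    not_lt.1 (card_filter_eq_zero_iff.1 h j (mem_univ _))
  have hstep : ∀ j, y (j + 1) = y j := fun j => Fin.ext
    ((sum_eq_sum_iff_of_le fun j _ => hle j).1 (sum_val_add_one y).symm j (mem_univ _)).symm
  have hnat : ∀ k : ℕ, y k = y 0 := fun k => by
    induction k with
    | zero => simp
    | succ k ih => rw [Nat.cast_succ, hstep, ih]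
  simpa using hnat j

lemma sum_filter_cyclicDescentCount_eq_zero {R : Type*} [AddCommMonoid R]
    (f : (Fin m → Fin r) → R) :
    ∑ y with cyclicDescentCount y = 0, f y = ∑ i, f (fun _ => i) := by
  refine sum_nbij' (fun y => y 0) (fun i _ => i) (by simp) (fun i _ => ?_) (fun y hy => ?_)
    (by simp) (fun y hy => ?_)
  · simp [cyclicDescentCount]
  · exact funext fun j => (eq_of_cyclicDescentCount_eq_zero (mem_filter.1 hy).2 j).symm
  · exact congrArg f (funext (eq_of_cyclicDescentCount_eq_zero (mem_filter.1 hy).2))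

lemma sum_pow_gam_mul_prod_rotate {R : Type*} [CommSemiring R] {q : R} (hq : q ^ m = 1)
    (v : Fin r → R) (k : Fin m) :
    ∑ y : Fin m → Fin r, q ^ gam y * ∏ j, v (y j) =
      ∑ y : Fin m → Fin r, (q ^ cyclicDescentCount y) ^ (k : ℕ) * (q ^ gam y * ∏ j, v (y j)) := by
  let rotate : (Fin m → Fin r) ≃ (Fin m → Fin r) := (Equiv.addRight k).arrowCongr (Equiv.refl _)
  rw [← rotate.sum_comp]
  refine sum_congr rfl fun y _ => ?_
  have hrotate : rotate y = fun j => y (j - k) := funext fun j => by simp [rotate, sub_eq_add_neg]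
  rw [hrotate, pow_gam_rotate hq, mul_assoc,
    Fintype.prod_equiv (Equiv.subRight k) (fun j => v (y (j - k))) (fun j => v (y j))
      fun _ => rfl]

end CyclicWords

section PrimitiveRoot

variable {R : Type*} [CommRing R] [IsDomain R] {m : ℕ} {q : R}

lemma IsPrimitiveRoot.sum_fin_pow_pow (hq : IsPrimitiveRoot q m) {c : ℕ} (hc : c < m) :
    ∑ k : Fin m, (q ^ c) ^ (k : ℕ) = if c = 0 then (m : R) else 0 := by
  rw [Fin.sum_univ_eq_sum_range (fun k => (q ^ c) ^ k)]
  split_ifs with h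
  · simp [h]
  have hgeom := mul_geom_sum (q ^ c) m
  rw [← pow_mul, mul_comm c m, pow_mul, hq.pow_eq_one, one_pow, sub_self] at hgeom
  exact (mul_eq_zero.1 hgeom).resolve_left (sub_ne_zero.2 (hq.pow_ne_one_of_pos_of_lt h hc))

variable {r : ℕ} [NeZero m]

theorem IsPrimitiveRoot.sum_pow_gam_mul_prod (hq : IsPrimitiveRoot q m) (v : Fin r → R) :
    ∑ y : Fin m → Fin r, q ^ gam y * ∏ j, v (y j) = ∑ i, v i ^ m := by
  refine mul_left_cancel₀ hq.neZero'.out ?_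
  calc (m : R) * ∑ y : Fin m → Fin r, q ^ gam y * ∏ j, v (y j)
      = ∑ k : Fin m, ∑ y : Fin m → Fin r,
          (q ^ cyclicDescentCount y) ^ (k : ℕ) * (q ^ gam y * ∏ j, v (y j)) := by
        rw [← sum_congr rfl fun k _ => sum_pow_gam_mul_prod_rotate hq.pow_eq_one v k]
        simp
    _ = ∑ y : Fin m → Fin r, (∑ k : Fin m, (q ^ cyclicDescentCount y) ^ (k : ℕ)) *
          (q ^ gam y * ∏ j, v (y j)) := by
        rw [sum_comm]
        simp only [sum_mul]
    _ = ∑ y : Fin m → Fin r, if cyclicDescentCount y = 0 then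
          (m : R) * (q ^ gam y * ∏ j, v (y j)) else 0 := by
        refine sum_congr rfl fun y _ => ?_
        rw [hq.sum_fin_pow_pow (cyclicDescentCount_lt y)]
        split_ifs <;> simp
    _ = (m : R) * ∑ i, v i ^ m := by
        rw [← sum_filter, ← mul_sum, sum_filter_cyclicDescentCount_eq_zero]
        simp [gam_const]

end PrimitiveRoot

section Blocks

variable {α : Type*} {r g m : ℕ}

/-- Concatenation of `g` words of length `m`; block `b` occupies the positions `m * b + t`. -/
def blocksEquiv (g m : ℕ) (α : Type*) : (Fin g → Fin m → α) ≃ (Fin (g * m) → α) :=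
  (Equiv.curry _ _ _).symm.trans (finProdFinEquiv.arrowCongr (Equiv.refl α))

@[simp]
lemma blocksEquiv_apply_finProdFinEquiv (z : Fin g → Fin m → α) (b : Fin g) (t : Fin m) :
    blocksEquiv g m α z (finProdFinEquiv (b, t)) = z b t := by
  simp [blocksEquiv]

lemma gam_blocksEquiv_modEq (z : Fin g → Fin m → Fin r) :
    gam (blocksEquiv g m _ z) ≡ ∑ b, gam (z b) [MOD m] := by
  rw [gam, ← finProdFinEquiv.sum_comp, Fintype.sum_prod_type]
  refine Nat.ModEq.sum fun b _ => Nat.ModEq.sum fun t _ => ?_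
  have hval : ((finProdFinEquiv (b, t) : Fin (g * m)) : ℕ) = t + m * b := rfl
  by_cases ht : (t : ℕ) + 1 < m
  · have hlt : (t : ℕ) + m * b + 1 < g * m := by
      nlinarith [b.isLt]
    have hnext : (⟨t + m * b + 1, hlt⟩ : Fin (g * m)) = finProdFinEquiv (b, ⟨t + 1, ht⟩) := by
      ext; simp only [finProdFinEquiv_apply_val]; omega
    simp only [hval, dif_pos hlt, dif_pos ht, hnext, blocksEquiv_apply_finProdFinEquiv]
    split_ifs
    · rw [Nat.ModEq, add_right_comm, Nat.add_mul_mod_self_left]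
    · rfl
  · have hend : (t : ℕ) + m * b + 1 = m * (b + 1) := by
      rw [mul_add, mul_one]; omega
    rw [dif_neg ht, hval]
    split_ifs
    · exact Nat.modEq_zero_iff_dvd.2 ⟨b + 1, hend⟩
    · rfl
    · rfl

lemma pow_gam_blocksEquiv {M : Type*} [CommMonoid M] {q : M} (hq : q ^ m = 1)
    (z : Fin g → Fin m → Fin r) :
    q ^ gam (blocksEquiv g m _ z) = ∏ b, q ^ gam (z b) := by
  rw [pow_eq_pow_mod _ hq, gam_blocksEquiv_modEq z, ← pow_eq_pow_mod _ hq, prod_pow_eq_pow_sum]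

lemma sum_pow_gam_mul_prod_blocks {R : Type*} [CommSemiring R] {q : R} (hq : q ^ m = 1)
    (v : Fin r → R) :
    ∑ x : Fin (g * m) → Fin r, q ^ gam x * ∏ j, v (x j) =
      (∑ y : Fin m → Fin r, q ^ gam y * ∏ j, v (y j)) ^ g := by
  rw [Fintype.sum_pow, ← (blocksEquiv g m _).sum_comp]
  refine sum_congr rfl fun z _ => ?_
  rw [pow_gam_blocksEquiv hq, ← finProdFinEquiv.prod_comp, Fintype.prod_prod_type,
    ← prod_mul_distrib]
  simp

end Blocks

lemma prod_pow_tau {M : Type*} [CommMonoid M] {n r : ℕ} (w : Fin r → M) (x : Fin n → Fin r) :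
    ∏ i, w i ^ tau i x = ∏ j, w (x j) := by
  rw [← prod_fiberwise univ x fun j => w (x j)]
  refine prod_congr rfl fun i _ => ?_
  rw [prod_congr rfl fun j hj => by rw [(mem_filter.1 hj).2], prod_const, tau]

lemma pow_sig {M : Type*} [CommMonoid M] {n r : ℕ} (ζ : M) (x : Fin n → Fin r) :
    ζ ^ sig x = ∏ j, ζ ^ (x j : ℕ) :=
  (prod_pow_eq_pow_sum _ _ _).symm

theorem stmt_11_general (n r : ℕ) (hn : 0 < n)
    (u₁ u₂ : ℕ) (w : Fin r → ℂ) :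
    ∑ x : Fin n → Fin r,
        expu ((u₁ : ℝ) / (n : ℝ)) ^ gam x * expu ((u₂ : ℝ) / (r : ℝ)) ^ sig x *
          ∏ i : Fin r, w i ^ tau i x
      = (∑ i : Fin r,
          w i ^ (n / Nat.gcd n u₁) *
            expu (((i : ℕ) * n * u₂ : ℝ) / ((Nat.gcd n u₁ : ℝ) * (r : ℝ)))) ^ Nat.gcd n u₁ := by
  set g := n.gcd u₁
  set m := n / g
  have hnm : n = g * m := (Nat.mul_div_cancel' (Nat.gcd_dvd_left n u₁)).symm
  have hq : IsPrimitiveRoot (expu (u₁ / n)) m := isPrimitiveRoot_expu_div hn u₁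
  have : NeZero m := ⟨(Nat.div_pos (Nat.gcd_le_left u₁ hn) (Nat.gcd_pos_of_pos_left u₁ hn)).ne'⟩
  set ζ := expu (u₂ / r)
  set v : Fin r → ℂ := fun i => w i * ζ ^ (i : ℕ)
  have hblocks := sum_pow_gam_mul_prod_blocks (g := g) hq.pow_eq_one v
  rw [← hnm] at hblocks
  calc _ = ∑ x : Fin n → Fin r, expu (u₁ / n) ^ gam x * ∏ j, v (x j) := by
        refine sum_congr rfl fun x _ => ?_
        rw [prod_pow_tau, pow_sig, prod_mul_distrib]
        ring
    _ = (∑ i, v i ^ m) ^ g := by rw [hblocks, hq.sum_pow_gam_mul_prod]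
    _ = _ := by
        refine congrArg (· ^ g) (sum_congr rfl fun i _ => ?_)
        rw [mul_pow, ← pow_mul, ← expu_natCast_mul]
        push_cast
        rw [show ((n / g : ℕ) : ℝ) = n / g from Nat.cast_div_charZero (Nat.gcd_dvd_left n u₁)]
        ring_nf

theorem stmt_11 (n r : ℕ) (hn : 0 < n) (hr : 0 < r)
    (u₁ u₂ : ℕ) (hu₁ : u₁ < n) (hu₂ : u₂ < r) (w : Fin r → ℂ) :
    ∑ x : Fin n → Fin r,
        expu ((u₁ : ℝ) / (n : ℝ)) ^ gam x * expu ((u₂ : ℝ) / (r : ℝ)) ^ sig x *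
          ∏ i : Fin r, w i ^ tau i x
      = (∑ i : Fin r,
          w i ^ (n / Nat.gcd n u₁) *
            expu (((i : ℕ) * n * u₂ : ℝ) / ((Nat.gcd n u₁ : ℝ) * (r : ℝ)))) ^ Nat.gcd n u₁ :=
  stmt_11_general n r hn u₁ u₂ w
end

section
/- Let r, n, s be positive integers and let H be an s×n matrix over ℤ_r = ZMod r such that the map u ↦ uH from (ℤ_r)^s to (ℤ_r)^n is injective. Let L := { x ∈ (ℤ_r)^n : H xᵀ = 0 } and L_⊥ := { uH : u ∈ (ℤ_r)^s }. Let w_0, …, w_{r−1} ∈ ℂ and define v_i := ∑_{k=0}^{r−1} w_k · e(ik/r) for i ∈ {0,…,r−1}. Then ∑_{x ∈ L} ∏_{i=0}^{r−1} w_i^{τ_i(x)} = (1/r^s) ∑_{y ∈ L_⊥} ∏_{i=0}^{r−1} v_i^{τ_i(y)}. -/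
/-!
MacWilliams identity via character sums. With `ψ` the standard additive character of `ZMod r`,
`v_i = ∑_k w_k ψ(i k)`, so expanding the product `∏_j v_{(uH)_j}` gives
`∑_x (∏_j w_{x_j}) ψ(uH · x) = ∑_x (∏_j w_{x_j}) ψ(u · Hxᵀ)`. Summing over `u`, orthogonality of
the characters `u ↦ ψ(u · z)` keeps exactly the `x` with `Hxᵀ = 0`, each with weight `r^s`.
Injectivity of `u ↦ uH` identifies the sum over `L_⊥` with the sum over `u`.
-/

open scoped Classical
open Finset

/-- `τ_i(y)` for vectors over `ZMod r` : the number of components of `y` equal to `i`. -/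
noncomputable def tauZ (r : ℕ) {n : ℕ} (i : Fin r) (y : Fin n → ZMod r) : ℕ :=
  (Finset.univ.filter (fun j => y j = ((i : ℕ) : ZMod r))).card

lemma ZMod.finEquiv_apply (r : ℕ) [NeZero r] (i : Fin r) : ZMod.finEquiv r i = (i : ℕ) := by
  obtain ⟨m, rfl⟩ := Nat.exists_eq_succ_of_ne_zero (NeZero.ne r)
  exact (Fin.cast_val_eq_self i).symm

lemma prod_pow_tauZ (r : ℕ) [NeZero r] {n : ℕ} {M : Type*} [CommMonoid M] (f : Fin r → M)
    (y : Fin n → ZMod r) :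
    ∏ i : Fin r, f i ^ tauZ r i y = ∏ j, f ((ZMod.finEquiv r).symm (y j)) := by
  rw [← Finset.prod_fiberwise' univ (fun j => (ZMod.finEquiv r).symm (y j)) f]
  refine prod_congr rfl fun i _ => ?_
  simp only [prod_const, tauZ, ← ZMod.finEquiv_apply, RingEquiv.symm_apply_eq]

lemma expu_div_eq_stdAddChar (r : ℕ) [NeZero r] (m : ℕ) :
    expu ((m : ℝ) / r) = ZMod.stdAddChar (m : ZMod r) := by
  rw [expu, ZMod.stdAddChar_apply, ZMod.toCircle_natCast]
  push_cast
  ring_nf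

lemma AddChar.map_sum_eq_prod {A M ι : Type*} [AddCommMonoid A] [CommMonoid M]
    (ψ : AddChar A M) (s : Finset ι) (f : ι → A) : ψ (∑ i ∈ s, f i) = ∏ i ∈ s, ψ (f i) := by
  induction s using Finset.cons_induction with
  | empty => simp
  | cons a s ha ih => rw [sum_cons, prod_cons, map_add_eq_mul, ih]

section MacWilliams

variable {R : Type*} [CommRing R] [Fintype R] [DecidableEq R] {ψ : AddChar R ℂ}
  {ι κ : Type*} [Fintype ι] [Fintype κ] [DecidableEq ι] [DecidableEq κ]

lemma AddChar.sum_dotProduct_eq_ite (hψ : ψ.IsPrimitive) (z : ι → R) :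
    ∑ u : ι → R, ψ (u ⬝ᵥ z) = if z = 0 then (Fintype.card R : ℂ) ^ Fintype.card ι else 0 := by
  have hprod : ∑ u : ι → R, ψ (u ⬝ᵥ z) = ∏ i, ∑ a, ψ (a * z i) := by
    simp only [Fintype.prod_sum, dotProduct, AddChar.map_sum_eq_prod]
  simp only [hprod, AddChar.sum_mulShift _ hψ]
  split_ifs with hz
  · simp [hz]
  · obtain ⟨i, hi⟩ := Function.ne_iff.mp hz
    exact prod_eq_zero (mem_univ i) (by simp [show z i ≠ 0 from hi])

theorem sum_prod_fourier_vecMul_eq (hψ : ψ.IsPrimitive) (W : R → ℂ) (H : Matrix ι κ R) :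
    ∑ u : ι → R, ∏ j, ∑ b, W b * ψ (Matrix.vecMul u H j * b)
      = (Fintype.card R : ℂ) ^ Fintype.card ι * ∑ x with H.mulVec x = 0, ∏ j, W (x j) := by
  have hexpand : ∀ y : κ → R,
      ∏ j, ∑ b, W b * ψ (y j * b) = ∑ x : κ → R, (∏ j, W (x j)) * ψ (y ⬝ᵥ x) := by
    intro y
    simp only [Fintype.prod_sum, dotProduct, AddChar.map_sum_eq_prod, prod_mul_distrib]
  calc ∑ u : ι → R, ∏ j, ∑ b, W b * ψ (Matrix.vecMul u H j * b)
      = ∑ x : κ → R, (∏ j, W (x j)) * ∑ u : ι → R, ψ (u ⬝ᵥ H.mulVec x) := by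
        simp only [hexpand, ← Matrix.dotProduct_mulVec, mul_sum]
        exact sum_comm
    _ = _ := by
        rw [sum_filter, mul_sum]
        refine sum_congr rfl fun x _ => ?_
        rw [AddChar.sum_dotProduct_eq_ite hψ]
        split_ifs <;> ring

end MacWilliams

theorem stmt_17_general (r n s : ℕ) [NeZero r]
    (H : Matrix (Fin s) (Fin n) (ZMod r))
    (hinj : Function.Injective (fun u : Fin s → ZMod r => Matrix.vecMul u H))
    (w : Fin r → ℂ) (v : Fin r → ℂ)
    (hv : ∀ i : Fin r, v i = ∑ k : Fin r, w k * expu (((i : ℕ) * (k : ℕ) : ℝ) / (r : ℝ))) :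
    ∑ x ∈ Finset.univ.filter (fun x : Fin n → ZMod r => H.mulVec x = 0),
        ∏ i : Fin r, w i ^ tauZ r i x
      = (1 / (r : ℂ) ^ s) *
          ∑ y ∈ Finset.image (fun u : Fin s → ZMod r => Matrix.vecMul u H) Finset.univ,
            ∏ i : Fin r, v i ^ tauZ r i y := by
  have hv_fourier : ∀ a : ZMod r, v ((ZMod.finEquiv r).symm a)
      = ∑ b, w ((ZMod.finEquiv r).symm b) * ZMod.stdAddChar (a * b) := by
    intro a
    obtain ⟨i, rfl⟩ := (ZMod.finEquiv r).surjective a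
    rw [RingEquiv.symm_apply_apply, hv]
    refine Fintype.sum_equiv (ZMod.finEquiv r).toEquiv _ _ fun k => ?_
    simp only [RingEquiv.toEquiv_eq_coe, EquivLike.coe_coe]
    rw [RingEquiv.symm_apply_apply, ZMod.finEquiv_apply, ZMod.finEquiv_apply, ← Nat.cast_mul,
      expu_div_eq_stdAddChar, Nat.cast_mul]
  rw [sum_image fun u _ u' _ h => hinj h]
  simp only [prod_pow_tauZ, hv_fourier]
  rw [sum_prod_fourier_vecMul_eq (ZMod.isPrimitive_stdAddChar r), ZMod.card, Fintype.card_fin,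
    one_div, inv_mul_cancel_left₀ (pow_ne_zero _ (NeZero.ne (r : ℂ)))]

theorem stmt_17 (r n s : ℕ) [NeZero r] (hn : 0 < n) (hs : 0 < s)
    (H : Matrix (Fin s) (Fin n) (ZMod r))
    (hinj : Function.Injective (fun u : Fin s → ZMod r => Matrix.vecMul u H))
    (w : Fin r → ℂ) (v : Fin r → ℂ)
    (hv : ∀ i : Fin r, v i = ∑ k : Fin r, w k * expu (((i : ℕ) * (k : ℕ) : ℝ) / (r : ℝ))) :
    ∑ x ∈ Finset.univ.filter (fun x : Fin n → ZMod r => H.mulVec x = 0),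
        ∏ i : Fin r, w i ^ tauZ r i x
      = (1 / (r : ℂ) ^ s) *
          ∑ y ∈ Finset.image (fun u : Fin s → ZMod r => Matrix.vecMul u H) Finset.univ,
            ∏ i : Fin r, v i ^ tauZ r i y :=
  stmt_17_general r n s H hinj w v hv
end
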